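/- arXiv:1304.0892 — 11 statements merged into one kernel-verified Lean document; each statement's English description precedes it below -/
import Mathlib

section
/- Self-mapping of the fixed-point map: Let N ≥ 1, let p_1, …, p_N ≥ 0, let u : [0,∞) → ℝ be non-negative and decreasing, and let each l_i : [0,∞)^N → ℝ satisfy l_i(x) ≥ x_i. Define F_i(x) = p_i + l_i(x) − u(∑_j x_j) and φ_i(x) = max{x_i − F_i(x), 0}. Then the map φ = (φ_1, …, φ_N) maps the cube [0, u(0)]^N into itself. -/
/-- **Self-mapping of the fixed-point map.** With nonnegative prices, `u` nonnegative and
decreasing on `[0,∞)`, and `l i x ≥ x i`, the map `φ_i(x) = max (x i - F i x) 0`, where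
`F i x = p i + l i x - u (∑ j, x j)`, maps the cube `[0, u 0]^N` into itself. -/
theorem phi_maps_cube_into_itself
    (N : ℕ) (hN : 1 ≤ N) (p : Fin N → ℝ) (hp : ∀ i, 0 ≤ p i)
    (u : ℝ → ℝ)
    (hu_nonneg : ∀ x ∈ Set.Ici (0 : ℝ), 0 ≤ u x)
    (hu_dec : ∀ x ∈ Set.Ici (0 : ℝ), ∀ y ∈ Set.Ici (0 : ℝ), x ≤ y → u y ≤ u x)
    (l : Fin N → (Fin N → ℝ) → ℝ)
    (hl : ∀ i, ∀ x : Fin N → ℝ, (∀ j, 0 ≤ x j) → x i ≤ l i x)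
    (F : Fin N → (Fin N → ℝ) → ℝ)
    (hF : ∀ i x, F i x = p i + l i x - u (∑ j, x j))
    (φ : Fin N → (Fin N → ℝ) → ℝ)
    (hφ : ∀ i x, φ i x = max (x i - F i x) 0) :
    ∀ x : Fin N → ℝ, (∀ j, x j ∈ Set.Icc (0 : ℝ) (u 0)) →
      ∀ i, φ i x ∈ Set.Icc (0 : ℝ) (u 0) := by
  intro x hx i
  have hx0 : ∀ j, 0 ≤ x j := fun j => (hx j).1
  have hS : (0:ℝ) ≤ ∑ j, x j := Finset.sum_nonneg fun j _ => hx0 j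
  have huS : u (∑ j, x j) ≤ u 0 :=
    hu_dec 0 Set.self_mem_Ici _ hS hS
  have hu0 : (0:ℝ) ≤ u 0 := hu_nonneg 0 Set.self_mem_Ici
  constructor
  · rw [hφ]; exact le_max_right _ _
  · rw [hφ, hF]
    have h1 : x i - (p i + l i x - u (∑ j, x j)) ≤ u 0 := by
      have := hl i x hx0
      have := hp i
      linarith
    exact max_le h1 hu0
end

section
/- Uniqueness of Wardrop equilibrium under weak interference (Theorem 2): Let G be an N×N real matrix with positive entries g_{ij} satisfying the weak cross-AP interference condition ∑_{j≠i}(g_{ij} + g_{ji}) < 2·g_{ii} for every i, let w, s > 0, and let M be the matrix with entries M_{ij} = g_{ji} + s. Then for every price vector p ∈ ℝ^N with p ≥ 0 there exists a unique x ∈ ℝ^N satisfying the linear complementarity problem: x ≥ 0 (componentwise), M x + (p − w·𝟏) ≥ 0 (componentwise), and xᵀ(M x + (p − w·𝟏)) = 0. -/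
/-!
Existence and uniqueness hold for any coercive `M`, i.e. `μ ‖z‖² ≤ zᵀ M z` with `μ > 0`.
Complementarity gives `(x - y)ᵀ M (x - y) ≤ 0` for two solutions `x, y`, hence `x = y`.
A solution is a fixed point of `x ↦ (x - α (M x + q))⁺`, which for small `α > 0` contracts the
Euclidean distance, so Banach's theorem provides one.

Here `M = Gᵀ + s 𝟏𝟏ᵀ` is coercive: the rank-one part adds `s (∑ zᵢ)² ≥ 0`, and splitting
`G i j zᵢ zⱼ = G i j (zᵢ + zⱼ)² / 2 - G i j (zᵢ² + zⱼ²) / 2` shows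
`zᵀ G z ≥ ∑ᵢ (G i i - ∑_{j ≠ i} (G i j + G j i) / 2) zᵢ²`,
with weights positive by weak interference.
-/

open Finset Matrix

theorem exists_pos_forall_le {ι : Type*} [Finite ι] {c : ι → ℝ} (hc : ∀ i, 0 < c i) :
    ∃ μ > 0, ∀ i, μ ≤ c i := by
  cases isEmpty_or_nonempty ι
  · exact ⟨1, one_pos, isEmptyElim⟩
  · obtain ⟨i₀, hi₀⟩ := Finite.exists_min c
    exact ⟨c i₀, hc i₀, hi₀⟩

variable {ι : Type*} [Fintype ι]

theorem dotProduct_self_nonneg (v : ι → ℝ) : 0 ≤ v ⬝ᵥ v :=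
  Fintype.sum_nonneg fun i => mul_self_nonneg (v i)

def IsLCPSolution (M : Matrix ι ι ℝ) (q x : ι → ℝ) : Prop :=
  0 ≤ x ∧ 0 ≤ M *ᵥ x + q ∧ x ⬝ᵥ (M *ᵥ x + q) = 0

namespace IsLCPSolution

variable {M : Matrix ι ι ℝ} {q x y : ι → ℝ}

theorem sub_dotProduct_mulVec_sub_nonpos (hx : IsLCPSolution M q x)
    (hy : IsLCPSolution M q y) : (x - y) ⬝ᵥ M *ᵥ (x - y) ≤ 0 := by
  obtain ⟨hx₀, hxq, hxc⟩ := hx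
  obtain ⟨hy₀, hyq, hyc⟩ := hy
  have hMsub : M *ᵥ (x - y) = (M *ᵥ x + q) - (M *ᵥ y + q) := by
    rw [mulVec_sub]; abel
  rw [hMsub, sub_dotProduct, dotProduct_sub, dotProduct_sub, hxc, hyc]
  linarith [dotProduct_nonneg_of_nonneg hx₀ hyq, dotProduct_nonneg_of_nonneg hy₀ hxq]

theorem eq_of_coercive {μ : ℝ} (hμ : 0 < μ) (hM : ∀ z, μ * (z ⬝ᵥ z) ≤ z ⬝ᵥ M *ᵥ z)
    (hx : IsLCPSolution M q x) (hy : IsLCPSolution M q y) : x = y := by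
  have hself : (x - y) ⬝ᵥ (x - y) ≤ 0 := by
    have := (hM (x - y)).trans (hx.sub_dotProduct_mulVec_sub_nonpos hy)
    exact nonpos_of_mul_nonpos_right this hμ
  exact sub_eq_zero.1 (dotProduct_self_eq_zero.1 (le_antisymm hself (dotProduct_self_nonneg _)))

end IsLCPSolution

theorem isLCPSolution_of_posPart_eq {M : Matrix ι ι ℝ} {q x : ι → ℝ} {α : ℝ} (hα : 0 < α)
    (h : (x - α • (M *ᵥ x + q))⁺ = x) : IsLCPSolution M q x := by
  set r := M *ᵥ x + q
  have hi : ∀ i, 0 ≤ x i ∧ 0 ≤ r i ∧ x i * r i = 0 := by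
    intro i
    have hxi : max (x i - α * r i) 0 = x i := by simpa [posPart_def] using congrFun h i
    rcases max_cases (x i - α * r i) 0 with ⟨hm, hle⟩ | ⟨hm, hlt⟩
    · have hr : r i = 0 := by
        have : α * r i = 0 := by linarith
        exact (mul_eq_zero.1 this).resolve_left hα.ne'
      refine ⟨by linarith, hr.ge, by rw [hr, mul_zero]⟩
    · have hx0 : x i = 0 := by linarith
      refine ⟨hx0.ge, ?_, by rw [hx0, zero_mul]⟩
      exact nonneg_of_mul_nonneg_right (by linarith) hα
  exact ⟨fun i => (hi i).1, fun i => (hi i).2.1, sum_eq_zero fun i _ => (hi i).2.2⟩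

theorem dotProduct_mulVec_self_le (M : Matrix ι ι ℝ) (z : ι → ℝ) :
    M *ᵥ z ⬝ᵥ M *ᵥ z ≤ (∑ i, ∑ j, M i j ^ 2) * (z ⬝ᵥ z) :=
  calc M *ᵥ z ⬝ᵥ M *ᵥ z = ∑ i, (∑ j, M i j * z j) ^ 2 := by simp [dotProduct, mulVec, sq]
    _ ≤ ∑ i, (∑ j, M i j ^ 2) * ∑ j, z j ^ 2 :=
        sum_le_sum fun i _ => sum_mul_sq_le_sq_mul_sq _ _ _
    _ = (∑ i, ∑ j, M i j ^ 2) * (z ⬝ᵥ z) := by simp [← sum_mul, dotProduct, sq]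

theorem posPart_sub_dotProduct_self_le (u v : ι → ℝ) :
    (u⁺ - v⁺) ⬝ᵥ (u⁺ - v⁺) ≤ (u - v) ⬝ᵥ (u - v) := by
  refine sum_le_sum fun i _ => ?_
  simp only [Pi.sub_apply, posPart_def, ← sq]
  exact sq_le_sq.2 (abs_max_sub_max_le_abs _ _ _)

theorem sub_smul_mulVec_dotProduct_self_le {M : Matrix ι ι ℝ} {μ C α : ℝ}
    (hM : ∀ z, μ * (z ⬝ᵥ z) ≤ z ⬝ᵥ M *ᵥ z) (hC : ∀ z, M *ᵥ z ⬝ᵥ M *ᵥ z ≤ C * (z ⬝ᵥ z))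
    (hα : 0 ≤ α) (z : ι → ℝ) :
    (z - α • M *ᵥ z) ⬝ᵥ (z - α • M *ᵥ z) ≤ (1 - 2 * α * μ + α ^ 2 * C) * (z ⬝ᵥ z) := by
  have hexpand : (z - α • M *ᵥ z) ⬝ᵥ (z - α • M *ᵥ z)
      = z ⬝ᵥ z - 2 * α * (z ⬝ᵥ M *ᵥ z) + α ^ 2 * (M *ᵥ z ⬝ᵥ M *ᵥ z) := by
    simp only [sub_dotProduct, dotProduct_sub, smul_dotProduct, dotProduct_smul, smul_eq_mul,
      dotProduct_comm (M *ᵥ z) z]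
    ring
  rw [hexpand]
  nlinarith [mul_le_mul_of_nonneg_left (hM z) hα, mul_le_mul_of_nonneg_left (hC z) (sq_nonneg α)]

theorem EuclideanSpace.dist_eq_sqrt_dotProduct (x y : EuclideanSpace ℝ ι) :
    dist x y = √((x.ofLp - y.ofLp) ⬝ᵥ (x.ofLp - y.ofLp)) := by
  simp [EuclideanSpace.dist_eq, dotProduct, Real.dist_eq, sq]

theorem exists_isLCPSolution {M : Matrix ι ι ℝ} {μ : ℝ} (hμ : 0 < μ)
    (hM : ∀ z, μ * (z ⬝ᵥ z) ≤ z ⬝ᵥ M *ᵥ z) (q : ι → ℝ) : ∃ x, IsLCPSolution M q x := by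
  set C := ∑ i, ∑ j, M i j ^ 2
  have hC : 0 ≤ C := by positivity
  set α := μ / (C + μ)
  have hα : 0 < α := by positivity
  set K := 1 - 2 * α * μ + α ^ 2 * C
  have hK : K < 1 := by
    have : α * C < 2 * μ := by
      rw [div_mul_eq_mul_div, div_lt_iff₀ (by positivity)]; nlinarith
    nlinarith
  let F : EuclideanSpace ℝ ι → EuclideanSpace ℝ ι :=
    fun x => WithLp.toLp 2 (x.ofLp - α • (M *ᵥ x.ofLp + q))⁺
  have hF : ContractingWith ⟨√K, Real.sqrt_nonneg K⟩ F := by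
    refine ⟨show √K < 1 from (Real.sqrt_lt' one_pos).2 (by linarith),
      LipschitzWith.of_dist_le_mul fun x y => ?_⟩
    have hsub : (x.ofLp - α • (M *ᵥ x.ofLp + q)) - (y.ofLp - α • (M *ᵥ y.ofLp + q))
        = x.ofLp - y.ofLp - α • M *ᵥ (x.ofLp - y.ofLp) := by
      rw [mulVec_sub, smul_sub, smul_add, smul_add]; abel
    set z := x.ofLp - y.ofLp
    calc dist (F x) (F y) ≤ √((z - α • M *ᵥ z) ⬝ᵥ (z - α • M *ᵥ z)) := by
          rw [EuclideanSpace.dist_eq_sqrt_dotProduct, ← hsub]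
          exact Real.sqrt_le_sqrt (posPart_sub_dotProduct_self_le _ _)
      _ ≤ √(K * (z ⬝ᵥ z)) := Real.sqrt_le_sqrt <|
          sub_smul_mulVec_dotProduct_self_le hM (dotProduct_mulVec_self_le M) hα.le z
      _ = √K * dist x y := by
          rw [Real.sqrt_mul' _ (dotProduct_self_nonneg z),
            EuclideanSpace.dist_eq_sqrt_dotProduct]
  exact ⟨_, isLCPSolution_of_posPart_eq hα (congrArg WithLp.ofLp hF.fixedPoint_isFixedPt)⟩

theorem existsUnique_isLCPSolution {M : Matrix ι ι ℝ} {μ : ℝ} (hμ : 0 < μ)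
    (hM : ∀ z, μ * (z ⬝ᵥ z) ≤ z ⬝ᵥ M *ᵥ z) (q : ι → ℝ) : ∃! x, IsLCPSolution M q x :=
  let ⟨x, hx⟩ := exists_isLCPSolution hμ hM q
  ⟨x, hx, fun _ hy => hy.eq_of_coercive hμ hM hx⟩

theorem dotProduct_mulVec_le_of_eq_transpose_add {G M : Matrix ι ι ℝ} {s : ℝ} (hs : 0 ≤ s)
    (hM : ∀ i j, M i j = G j i + s) (z : ι → ℝ) : z ⬝ᵥ G *ᵥ z ≤ z ⬝ᵥ M *ᵥ z := by
  have hexpand : z ⬝ᵥ M *ᵥ z = z ⬝ᵥ G *ᵥ z + s * (∑ i, z i) ^ 2 := by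
    have hMz : z ⬝ᵥ M *ᵥ z = ∑ i, ∑ j, (G j i * z i * z j + s * (z i * z j)) := by
      simp only [dotProduct, mulVec, hM, mul_sum]
      exact sum_congr rfl fun i _ => sum_congr rfl fun j _ => by ring
    have hGz : z ⬝ᵥ G *ᵥ z = ∑ i, ∑ j, G j i * z i * z j := by
      simp only [dotProduct, mulVec, mul_sum]
      rw [sum_comm]
      exact sum_congr rfl fun i _ => sum_congr rfl fun j _ => by ring
    rw [hMz, hGz, sq, sum_mul_sum, mul_sum]
    simp only [mul_sum, sum_add_distrib]
  rw [hexpand]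
  have := mul_nonneg hs (sq_nonneg (∑ i, z i))
  linarith

theorem sum_mul_sq_le_dotProduct_mulVec [DecidableEq ι] {G : Matrix ι ι ℝ}
    (hG : ∀ i j, i ≠ j → 0 ≤ G i j) (z : ι → ℝ) :
    ∑ i, (G i i - (∑ j ∈ univ.erase i, (G i j + G j i)) / 2) * z i ^ 2 ≤ z ⬝ᵥ G *ᵥ z := by
  have hsplit : z ⬝ᵥ G *ᵥ z = ∑ i, ∑ j, G i j * (z i + z j) ^ 2 / 2
      - ∑ i, (∑ j, (G i j + G j i)) / 2 * z i ^ 2 := by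
    have hsq : ∑ i, (∑ j, (G i j + G j i)) / 2 * z i ^ 2
        = ∑ i, ∑ j, (G i j * z i ^ 2 / 2 + G i j * z j ^ 2 / 2) := by
      simp only [sum_add_distrib, add_div, add_mul, sum_div, sum_mul, div_mul_eq_mul_div]
      rw [sum_comm (f := fun i j => G i j * z j ^ 2 / 2)]
    rw [hsq, ← sum_sub_distrib]
    simp only [dotProduct, mulVec, mul_sum, ← sum_sub_distrib]
    exact sum_congr rfl fun i _ => sum_congr rfl fun j _ => by ring
  have hdiag : ∀ i, 2 * G i i * z i ^ 2 ≤ ∑ j, G i j * (z i + z j) ^ 2 / 2 := by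
    intro i
    rw [← add_sum_erase _ _ (mem_univ i)]
    have : 0 ≤ ∑ j ∈ univ.erase i, G i j * (z i + z j) ^ 2 / 2 :=
      sum_nonneg fun j hj => by have := hG i j (ne_of_mem_erase hj).symm; positivity
    linarith
  have hrow : ∀ i, ∑ j, (G i j + G j i) = 2 * G i i + ∑ j ∈ univ.erase i, (G i j + G j i) := by
    intro i; rw [← add_sum_erase _ _ (mem_univ i)]; ring
  rw [hsplit, le_sub_iff_add_le, ← sum_add_distrib]
  exact sum_le_sum fun i _ => by rw [hrow]; linarith [hdiag i]

theorem uniqueness_of_wardrop_equilibrium_general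
    (N : ℕ) (G : Matrix (Fin N) (Fin N) ℝ) (hG : ∀ i j, 0 < G i j)
    (hweak : ∀ i, ∑ j ∈ Finset.univ.erase i, (G i j + G j i) < 2 * G i i)
    (w s : ℝ) (hs : 0 < s)
    (M : Matrix (Fin N) (Fin N) ℝ) (hM : ∀ i j, M i j = G j i + s)
    (p : Fin N → ℝ) :
    ∃! x : Fin N → ℝ,
      (∀ i, 0 ≤ x i) ∧
      (∀ i, 0 ≤ M.mulVec x i + (p i - w)) ∧
      (∑ i, x i * (M.mulVec x i + (p i - w))) = 0 := by
  set c : Fin N → ℝ := fun i => G i i - (∑ j ∈ univ.erase i, (G i j + G j i)) / 2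
  have hc : ∀ i, 0 < c i := fun i => by simp only [c]; linarith [hweak i]
  obtain ⟨μ, hμ, hμc⟩ := exists_pos_forall_le hc
  have hcoercive : ∀ z, μ * (z ⬝ᵥ z) ≤ z ⬝ᵥ M *ᵥ z := fun z =>
    calc μ * (z ⬝ᵥ z) ≤ ∑ i, c i * z i ^ 2 := by
          simp only [dotProduct, mul_sum, ← sq]
          exact sum_le_sum fun i _ => mul_le_mul_of_nonneg_right (hμc i) (sq_nonneg _)
      _ ≤ z ⬝ᵥ G *ᵥ z := sum_mul_sq_le_dotProduct_mulVec (fun i j _ => (hG i j).le) z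
      _ ≤ z ⬝ᵥ M *ᵥ z := dotProduct_mulVec_le_of_eq_transpose_add hs.le hM z
  exact existsUnique_isLCPSolution hμ hcoercive (fun i => p i - w)

/-- **Uniqueness of Wardrop equilibrium under weak interference (Theorem 2).**
Under the weak cross-AP interference condition, for every nonnegative price vector `p`
the linear complementarity problem `x ≥ 0`, `M x + (p - w·𝟏) ≥ 0`,
`xᵀ (M x + (p - w·𝟏)) = 0` has a unique solution. -/
theorem uniqueness_of_wardrop_equilibrium
    (N : ℕ) (G : Matrix (Fin N) (Fin N) ℝ) (hG : ∀ i j, 0 < G i j)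
    (hweak : ∀ i, ∑ j ∈ Finset.univ.erase i, (G i j + G j i) < 2 * G i i)
    (w s : ℝ) (hw : 0 < w) (hs : 0 < s)
    (M : Matrix (Fin N) (Fin N) ℝ) (hM : ∀ i j, M i j = G j i + s)
    (p : Fin N → ℝ) (hp : ∀ i, 0 ≤ p i) :
    ∃! x : Fin N → ℝ,
      (∀ i, 0 ≤ x i) ∧
      (∀ i, 0 ≤ M.mulVec x i + (p i - w)) ∧
      (∑ i, x i * (M.mulVec x i + (p i - w))) = 0 :=
  uniqueness_of_wardrop_equilibrium_general N G hG hweak w s hs M hM p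
end

section
/- Wardrop equilibrium for two APs when only the cheaper AP is affordable: Consider two APs with congestion functions l_1(x) = x_1 + a·x_2, l_2(x) = b·x_1 + x_2 where a, b > 0, and let u : [0,∞) → ℝ be continuous, bounded, non-negative and decreasing. If the prices satisfy 0 ≤ p_1 < u(0) ≤ p_2, then a Wardrop equilibrium exists and is unique; it has x_2 = 0 and x_1 equal to the unique solution of the equation x_1 + p_1 = u(x_1). -/
/-- A flow vector `x ∈ [0,∞)²` is a Wardrop equilibrium for the two-AP market with
congestion functions `l₁ x = x₁ + a x₂`, `l₂ x = b x₁ + x₂`, inverse demand `u` and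
prices `(p₁, p₂)`. -/
def IsTwoAPWE (a b : ℝ) (u : ℝ → ℝ) (p1 p2 : ℝ) (x : ℝ × ℝ) : Prop :=
  0 ≤ x.1 ∧ 0 ≤ x.2 ∧
  (0 < x.1 → p1 + (x.1 + a * x.2) = u (x.1 + x.2)) ∧
  (x.1 = 0 → u (x.1 + x.2) ≤ p1 + (x.1 + a * x.2)) ∧
  (0 < x.2 → p2 + (b * x.1 + x.2) = u (x.1 + x.2)) ∧
  (x.2 = 0 → u (x.1 + x.2) ≤ p2 + (b * x.1 + x.2))

/-- **Wardrop equilibrium for two APs when only the cheaper AP is affordable.**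
If `0 ≤ p₁ < u 0 ≤ p₂`, a Wardrop equilibrium exists and is unique; it has `x₂ = 0`
and `x₁` the unique solution of `x₁ + p₁ = u x₁`. -/
theorem two_ap_we_cheap_ap_only
    (a b : ℝ) (ha : 0 < a) (hb : 0 < b)
    (u : ℝ → ℝ)
    (hu_cont : ContinuousOn u (Set.Ici 0))
    (hu_bdd : ∃ C : ℝ, ∀ x ∈ Set.Ici (0 : ℝ), |u x| ≤ C)
    (hu_nonneg : ∀ x ∈ Set.Ici (0 : ℝ), 0 ≤ u x)
    (hu_dec : ∀ x ∈ Set.Ici (0 : ℝ), ∀ y ∈ Set.Ici (0 : ℝ), x ≤ y → u y ≤ u x)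
    (p1 p2 : ℝ) (hp1 : 0 ≤ p1) (h1 : p1 < u 0) (h2 : u 0 ≤ p2) :
    (∃! x : ℝ × ℝ, IsTwoAPWE a b u p1 p2 x) ∧
    (∀ x : ℝ × ℝ, IsTwoAPWE a b u p1 p2 x → x.2 = 0 ∧ x.1 + p1 = u x.1) ∧
    (∃! y : ℝ, 0 ≤ y ∧ y + p1 = u y) := by
  obtain ⟨C, hC⟩ := hu_bdd
  have hC0 : 0 ≤ C := le_trans (abs_nonneg _) (hC 0 (Set.mem_Ici.mpr le_rfl))
  -- uniqueness of the solution of y + p1 = u y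
  have huniq : ∀ y z : ℝ, (0 ≤ y ∧ y + p1 = u y) → (0 ≤ z ∧ z + p1 = u z) → y = z := by
    intro y z ⟨hy, hey⟩ ⟨hz, hez⟩
    by_contra hne
    rcases lt_or_gt_of_ne hne with h | h
    · have := hu_dec y hy z hz h.le
      linarith
    · have := hu_dec z hz y hy h.le
      linarith
  -- existence via IVT on [0, C]
  have hex : ∃ y : ℝ, 0 ≤ y ∧ y + p1 = u y := by
    set f : ℝ → ℝ := fun y => y + p1 - u y with hf
    have hcont : ContinuousOn f (Set.Icc 0 C) := by
      apply ContinuousOn.sub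
      · exact (continuous_id.add continuous_const).continuousOn
      · exact hu_cont.mono (Set.Icc_subset_Ici_self)
    have hf0 : f 0 ≤ 0 := by simp [hf]; linarith
    have hfC : 0 ≤ f C := by
      have := (abs_le.mp (hC C hC0)).2
      simp [hf]; linarith
    have := intermediate_value_Icc hC0 hcont
    have h0mem : (0 : ℝ) ∈ Set.Icc (f 0) (f C) := ⟨hf0, hfC⟩
    obtain ⟨y, hy, hfy⟩ := this h0mem
    refine ⟨y, hy.1, ?_⟩
    have : y + p1 - u y = 0 := hfy
    linarith
  obtain ⟨y0, hy0, hey0⟩ := hex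
  have hy0pos : 0 < y0 := by
    rcases hy0.lt_or_eq with h | h
    · exact h
    · exfalso; rw [← h] at hey0; linarith
  -- characterization: every WE is (y0, 0)
  have hchar : ∀ x : ℝ × ℝ, IsTwoAPWE a b u p1 p2 x → x.2 = 0 ∧ x.1 + p1 = u x.1 := by
    intro x hx
    obtain ⟨hx1, hx2, he1, hz1, he2, hz2⟩ := hx
    have hsum : 0 ≤ x.1 + x.2 := by linarith
    have hx2z : x.2 = 0 := by
      by_contra hne
      have hx2pos : 0 < x.2 := lt_of_le_of_ne hx2 (Ne.symm hne)
      have heq := he2 hx2pos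
      have hle : u (x.1 + x.2) ≤ u 0 := hu_dec 0 (Set.mem_Ici.mpr le_rfl) _ hsum hsum
      nlinarith
    refine ⟨hx2z, ?_⟩
    have hx1pos : 0 < x.1 := by
      rcases hx1.lt_or_eq with h | h
      · exact h
      · exfalso
        have := hz1 h.symm
        rw [← h, hx2z] at this
        simp at this
        linarith
    have := he1 hx1pos
    rw [hx2z] at this
    simp at this
    linarith [this]
  have hwe0 : IsTwoAPWE a b u p1 p2 (y0, 0) := by
    refine ⟨hy0, le_rfl, ?_, ?_, ?_, ?_⟩
    · intro _; simp; linarith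
    · intro h; exfalso; linarith
    · intro h; exact absurd h (lt_irrefl 0)
    · intro _
      simp only
      have : u (y0 + 0) ≤ u 0 := hu_dec 0 (Set.mem_Ici.mpr le_rfl) (y0 + 0) (Set.mem_Ici.mpr (by linarith)) (by linarith)
      nlinarith
  refine ⟨⟨(y0, 0), hwe0, ?_⟩, hchar, ⟨y0, ⟨hy0, hey0⟩, fun z hz => huniq z y0 hz ⟨hy0, hey0⟩⟩⟩
  intro x hx
  obtain ⟨h2z, he⟩ := hchar x hx
  have h1e : x.1 = y0 := huniq x.1 y0 ⟨hx.1, he⟩ ⟨hy0, hey0⟩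
  exact Prod.ext h1e h2z
end

section
/- Total demand characterization in the small-interference region (region (a)): Fix W > 0 (the value u(0)), prices 0 ≤ p_1 < p_2 < W, and cross-interference coefficients with 0 ≤ a < (W − p_1)/(W − p_2) and 0 ≤ b < (W − p_2)/(W − p_1). Fix a market disutility level d with p_2 < d < W. (i) If d ≤ (p_2 − b·p_1)/(1 − b), then the unique x ∈ [0,∞)² satisfying [x_i > 0 ⟹ p_i + l_i(x) = d and x_i = 0 ⟹ p_i + l_i(x) ≥ d for i = 1,2] is (x_1, x_2) = (d − p_1, 0), so the total demand is f(d) = d − p_1. (ii) If d > (p_2 − b·p_1)/(1 − b), then the unique such x is x_1 = ((1−a)d + a·p_2 − p_1)/(1 − ab), x_2 = ((1−b)d + b·p_1 − p_2)/(1 − ab), both strictly positive, so the total demand is f(d) = ((2−a−b)d + (a−1)p_2 + (b−1)p_1)/(1 − ab). -/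
/-- A flow vector `x ∈ [0,∞)²` realizes the fixed market disutility level `d` in the two-AP
market with congestion functions `l₁ x = x₁ + a x₂`, `l₂ x = b x₁ + x₂` and prices
`(p₁, p₂)`: for `i = 1, 2`, `xᵢ > 0` implies `pᵢ + lᵢ x = d` and `xᵢ = 0` implies
`pᵢ + lᵢ x ≥ d`. -/
def WEAtDisutility (a b p1 p2 d : ℝ) (x : ℝ × ℝ) : Prop :=
  0 ≤ x.1 ∧ 0 ≤ x.2 ∧
  (0 < x.1 → p1 + (x.1 + a * x.2) = d) ∧
  (x.1 = 0 → d ≤ p1 + (x.1 + a * x.2)) ∧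
  (0 < x.2 → p2 + (b * x.1 + x.2) = d) ∧
  (x.2 = 0 → d ≤ p2 + (b * x.1 + x.2))

/-!
At a disutility level `d > p₁`, AP 1 always carries flow: with `x₁ = 0` either nobody is served
(impossible since `p₁ < d`) or only AP 2 is, at `x₂ = d - p₂`, which would require
`a (d - p₂) ≥ d - p₁`; this fails in region (a) because `(t - p₁)/(t - p₂)` decreases in `t`.
So either `x = (d - p₁, 0)`, an equilibrium exactly when AP 2 is not worth entering
(`d - p₂ ≤ b (d - p₁)`), or both APs are used and `x` solves the `2 × 2` linear system, whose
determinant `1 - a b` is positive because `a b < (W - p₁)/(W - p₂) · (W - p₂)/(W - p₁) = 1`.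
-/

/-- The solution of `x₁ + a x₂ = d - p₁`, `b x₁ + x₂ = d - p₂` by Cramer's rule. -/
noncomputable def interiorFlow (a b p1 p2 d : ℝ) : ℝ × ℝ :=
  (((1 - a) * d + a * p2 - p1) / (1 - a * b), ((1 - b) * d + b * p1 - p2) / (1 - a * b))

theorem mul_lt_one_of_lt_div_of_lt_div {a b u v : ℝ} (hu : 0 < u) (hv : 0 < v)
    (ha0 : 0 ≤ a) (hb0 : 0 ≤ b) (ha : a < u / v) (hb : b < v / u) : a * b < 1 := by
  calc a * b < u / v * (v / u) := mul_lt_mul'' ha hb ha0 hb0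
    _ = 1 := by field_simp

theorem sub_div_sub_le_sub_div_sub {p1 p2 d W : ℝ} (hp : p1 ≤ p2) (hd : p2 < d) (hdW : d ≤ W) :
    (W - p1) / (W - p2) ≤ (d - p1) / (d - p2) := by
  rw [div_le_div_iff₀ (by linarith) (by linarith)]
  nlinarith

theorem eq_interiorFlow_iff {a b p1 p2 d : ℝ} (hab : a * b ≠ 1) (x : ℝ × ℝ) :
    x = interiorFlow a b p1 p2 d ↔
      x.1 + a * x.2 = d - p1 ∧ b * x.1 + x.2 = d - p2 := by
  have hdet : 1 - a * b ≠ 0 := sub_ne_zero.mpr (Ne.symm hab)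
  constructor
  · rintro rfl
    simp only [interiorFlow]
    constructor <;> rw [mul_div_assoc', ← add_div, div_eq_iff hdet] <;> ring
  · rintro ⟨h1, h2⟩
    refine Prod.ext ?_ ?_ <;> simp only [interiorFlow] <;> rw [eq_div_iff hdet]
    · linear_combination h1 - a * h2
    · linear_combination h2 - b * h1

namespace WEAtDisutility

variable {a b p1 p2 d : ℝ} {x : ℝ × ℝ}

theorem fst_pos (hx : WEAtDisutility a b p1 p2 d x) (hd : p1 < d)
    (hN1 : a * (d - p2) < d - p1) : 0 < x.1 := by
  obtain ⟨hx1, hx2, -, hz1, he2, -⟩ := hx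
  refine hx1.lt_of_ne fun h1 => ?_
  have hz1 := hz1 h1.symm
  rw [← h1] at hz1 he2
  rcases hx2.eq_or_lt with h2 | h2
  · rw [← h2] at hz1
    linarith
  · have he2 := he2 h2
    have hx2_eq : x.2 = d - p2 := by linarith
    rw [hx2_eq] at hz1
    linarith

theorem iff_of_pos (h1 : 0 < x.1) (h2 : 0 < x.2) :
    WEAtDisutility a b p1 p2 d x ↔ x.1 + a * x.2 = d - p1 ∧ b * x.1 + x.2 = d - p2 := by
  constructor
  · rintro ⟨-, -, he1, -, he2, -⟩
    exact ⟨by linarith [he1 h1], by linarith [he2 h2]⟩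
  · rintro ⟨he1, he2⟩
    exact ⟨h1.le, h2.le, fun _ => by linarith, fun h => absurd h h1.ne',
      fun _ => by linarith, fun h => absurd h h2.ne'⟩

theorem boundary_iff (hd : p1 < d) :
    WEAtDisutility a b p1 p2 d (d - p1, 0) ↔ d - p2 ≤ b * (d - p1) := by
  simp only [WEAtDisutility, mul_zero, add_zero]
  constructor
  · rintro ⟨-, -, -, -, -, h⟩
    linarith [h trivial]
  · intro h
    exact ⟨by linarith, le_rfl, fun _ => by ring, fun h' => by linarith,
      fun h' => absurd h' (lt_irrefl 0), fun _ => by linarith⟩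

end WEAtDisutility

theorem interiorFlow_pos {a b p1 p2 d : ℝ} (hN1 : a * (d - p2) < d - p1)
    (hN2 : b * (d - p1) < d - p2) (hab : a * b < 1) :
    0 < (interiorFlow a b p1 p2 d).1 ∧ 0 < (interiorFlow a b p1 p2 d).2 :=
  ⟨div_pos (by linarith) (by linarith), div_pos (by linarith) (by linarith)⟩

theorem weAtDisutility_iff {a b p1 p2 d : ℝ} (hd : p1 < d) (hN1 : a * (d - p2) < d - p1)
    (hab : a * b < 1) (x : ℝ × ℝ) :
    WEAtDisutility a b p1 p2 d x ↔
      (d - p2 ≤ b * (d - p1) ∧ x = (d - p1, 0)) ∨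
      (b * (d - p1) < d - p2 ∧ x = interiorFlow a b p1 p2 d) := by
  constructor
  · intro hx
    have h1 := hx.fst_pos hd hN1
    obtain ⟨x1, x2⟩ := x
    rcases hx.2.1.eq_or_lt with rfl | h2
    · obtain rfl : x1 = d - p1 := by linarith [hx.2.2.1 h1]
      exact Or.inl ⟨(WEAtDisutility.boundary_iff hd).mp hx, rfl⟩
    · obtain ⟨he1, he2⟩ := (WEAtDisutility.iff_of_pos h1 h2).mp hx
      have hN2 : (1 - a * b) * x2 = d - p2 - b * (d - p1) := by
        linear_combination he2 - b * he1
      exact Or.inr ⟨by nlinarith [mul_pos (sub_pos.mpr hab) h2],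
        (eq_interiorFlow_iff hab.ne _).mpr ⟨he1, he2⟩⟩
  · rintro (⟨hN2, rfl⟩ | ⟨hN2, rfl⟩)
    · exact (WEAtDisutility.boundary_iff hd).mpr hN2
    · obtain ⟨h1, h2⟩ := interiorFlow_pos hN1 hN2 hab
      exact (WEAtDisutility.iff_of_pos h1 h2).mpr ((eq_interiorFlow_iff hab.ne _).mp rfl)

theorem total_demand_region_a_general
    (W p1 p2 a b d : ℝ)
    (hp12 : p1 < p2)
    (ha0 : 0 ≤ a) (ha : a < (W - p1) / (W - p2))
    (hb0 : 0 ≤ b) (hb : b < (W - p2) / (W - p1))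
    (hd1 : p2 < d) (hd2 : d < W) :
    (d ≤ (p2 - b * p1) / (1 - b) →
      (∀ x : ℝ × ℝ, WEAtDisutility a b p1 p2 d x ↔ x = (d - p1, 0)) ∧
      (d - p1) + 0 = d - p1) ∧
    ((p2 - b * p1) / (1 - b) < d →
      (∀ x : ℝ × ℝ, WEAtDisutility a b p1 p2 d x ↔
        x = (((1 - a) * d + a * p2 - p1) / (1 - a * b),
             ((1 - b) * d + b * p1 - p2) / (1 - a * b))) ∧
      0 < ((1 - a) * d + a * p2 - p1) / (1 - a * b) ∧
      0 < ((1 - b) * d + b * p1 - p2) / (1 - a * b) ∧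
      ((1 - a) * d + a * p2 - p1) / (1 - a * b)
        + ((1 - b) * d + b * p1 - p2) / (1 - a * b)
        = ((2 - a - b) * d + (a - 1) * p2 + (b - 1) * p1) / (1 - a * b)) := by
  have hW1 : 0 < W - p1 := by linarith
  have hW2 : 0 < W - p2 := by linarith
  have hab := mul_lt_one_of_lt_div_of_lt_div hW1 hW2 ha0 hb0 ha hb
  have hb1 : 0 < 1 - b := sub_pos.mpr (hb.trans ((div_lt_one hW1).mpr (by linarith)))
  have hN1 : a * (d - p2) < d - p1 :=
    (lt_div_iff₀ (by linarith)).mp (ha.trans_le (sub_div_sub_le_sub_div_sub hp12.le hd1 hd2.le))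
  have hclass := weAtDisutility_iff (hp12.trans hd1) hN1 hab
  refine ⟨fun hdle => ⟨fun x => ?_, add_zero _⟩, fun hdgt => ?_⟩
  · have hN2 : d - p2 ≤ b * (d - p1) := by linarith [(le_div_iff₀ hb1).mp hdle]
    simp [hclass, hN2]
  · have hN2 : b * (d - p1) < d - p2 := by linarith [(div_lt_iff₀ hb1).mp hdgt]
    obtain ⟨h1, h2⟩ := interiorFlow_pos hN1 hN2 hab
    refine ⟨fun x => ?_, h1, h2, by rw [← add_div]; ring⟩
    simp [hclass, hN2.not_ge, hN2, interiorFlow]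

/-- **Total demand characterization in the small-interference region (region (a)).**
With `W = u 0`, prices `0 ≤ p₁ < p₂ < W`, interference coefficients
`0 ≤ a < (W - p₁)/(W - p₂)` and `0 ≤ b < (W - p₂)/(W - p₁)`, and a disutility level
`p₂ < d < W`:
(i) if `d ≤ (p₂ - b p₁)/(1 - b)`, the unique flow realizing `d` is `(d - p₁, 0)`,
so the total demand is `d - p₁`;
(ii) if `d > (p₂ - b p₁)/(1 - b)`, the unique flow realizing `d` is the strictly positive
pair `(((1-a)d + a p₂ - p₁)/(1 - a b), ((1-b)d + b p₁ - p₂)/(1 - a b))`, so the total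
demand is `((2-a-b)d + (a-1)p₂ + (b-1)p₁)/(1 - a b)`. -/
theorem total_demand_region_a
    (W p1 p2 a b d : ℝ)
    (hW : 0 < W) (hp1 : 0 ≤ p1) (hp12 : p1 < p2) (hp2W : p2 < W)
    (ha0 : 0 ≤ a) (ha : a < (W - p1) / (W - p2))
    (hb0 : 0 ≤ b) (hb : b < (W - p2) / (W - p1))
    (hd1 : p2 < d) (hd2 : d < W) :
    (d ≤ (p2 - b * p1) / (1 - b) →
      (∀ x : ℝ × ℝ, WEAtDisutility a b p1 p2 d x ↔ x = (d - p1, 0)) ∧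
      (d - p1) + 0 = d - p1) ∧
    ((p2 - b * p1) / (1 - b) < d →
      (∀ x : ℝ × ℝ, WEAtDisutility a b p1 p2 d x ↔
        x = (((1 - a) * d + a * p2 - p1) / (1 - a * b),
             ((1 - b) * d + b * p1 - p2) / (1 - a * b))) ∧
      0 < ((1 - a) * d + a * p2 - p1) / (1 - a * b) ∧
      0 < ((1 - b) * d + b * p1 - p2) / (1 - a * b) ∧
      ((1 - a) * d + a * p2 - p1) / (1 - a * b)
        + ((1 - b) * d + b * p1 - p2) / (1 - a * b)
        = ((2 - a - b) * d + (a - 1) * p2 + (b - 1) * p1) / (1 - a * b)) :=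
  total_demand_region_a_general W p1 p2 a b d hp12 ha0 ha hb0 hb hd1 hd2
end

section
/- Both APs carry positive flow at a monopoly optimum (intermediate claim of Theorem 3): Consider the two-AP linear market with cross-interference coefficients a, b > 0 satisfying a + b < 2 and inverse demand u(x) = w − s·x, w, s > 0, and let x^WE(p) denote the unique Wardrop equilibrium at prices p ≥ 0. If p* ∈ [0,∞)² maximizes the total profit p_1·x_1^WE(p) + p_2·x_2^WE(p) over all p ∈ [0,∞)², then both x_1^WE(p*) > 0 and x_2^WE(p*) > 0. -/
/-- A flow vector `x ∈ [0,∞)²` is a Wardrop equilibrium of the two-AP linear market with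
cross-interference coefficients `a, b`, inverse demand `u x = w - s x`, and prices
`p = (p₁, p₂)`. -/
def IsLinWE (a b w s : ℝ) (p x : ℝ × ℝ) : Prop :=
  0 ≤ x.1 ∧ 0 ≤ x.2 ∧
  (0 < x.1 → p.1 + (x.1 + a * x.2) = w - s * (x.1 + x.2)) ∧
  (x.1 = 0 → w - s * (x.1 + x.2) ≤ p.1 + (x.1 + a * x.2)) ∧
  (0 < x.2 → p.2 + (b * x.1 + x.2) = w - s * (x.1 + x.2)) ∧
  (x.2 = 0 → w - s * (x.1 + x.2) ≤ p.2 + (b * x.1 + x.2))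

set_option maxHeartbeats 1000000 in
/-- **Both APs carry positive flow at a monopoly optimum (intermediate claim of Theorem 3).**
If `xWE p` is the Wardrop equilibrium at prices `p ≥ 0` and `p*` maximizes the total
profit `p₁ · x₁^WE(p) + p₂ · x₂^WE(p)` over `[0,∞)²`, then both equilibrium flows at `p*`
are strictly positive. -/
theorem monopoly_optimum_both_flows_positive
    (a b w s : ℝ) (ha : 0 < a) (hb : 0 < b) (hab : a + b < 2)
    (hw : 0 < w) (hs : 0 < s)
    (xWE : ℝ × ℝ → ℝ × ℝ)
    (hxWE : ∀ p : ℝ × ℝ, 0 ≤ p.1 → 0 ≤ p.2 → IsLinWE a b w s p (xWE p))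
    (pstar : ℝ × ℝ) (hp1 : 0 ≤ pstar.1) (hp2 : 0 ≤ pstar.2)
    (hmax : ∀ q : ℝ × ℝ, 0 ≤ q.1 → 0 ≤ q.2 →
      q.1 * (xWE q).1 + q.2 * (xWE q).2 ≤ pstar.1 * (xWE pstar).1 + pstar.2 * (xWE pstar).2) :
    0 < (xWE pstar).1 ∧ 0 < (xWE pstar).2 := by
  have Hx := hxWE pstar hp1 hp2
  rw [IsLinWE] at Hx
  obtain ⟨hx1, hx2, he1, hz1, he2, hz2⟩ := Hx
  -- key positive quantity
  have hDpos : (0:ℝ) < 4 * s + 2 + a + b := by positivity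
  set t : ℝ := w / (4 * s + 2 + a + b) with ht
  have htpos : 0 < t := div_pos hw hDpos
  have hDt : (4 * s + 2 + a + b) * t = w := by
    rw [ht]; field_simp
  -- deviation prices
  set q1 : ℝ := w - (2 * s + 1 + a) * t with hq1
  set q2 : ℝ := w - (2 * s + 1 + b) * t with hq2
  have hq1pos : 0 < q1 := by
    rw [hq1]
    nlinarith [mul_pos (by linarith : (0:ℝ) < 2 * s + 1 + b) htpos]
  have hq2pos : 0 < q2 := by
    rw [hq2]
    nlinarith [mul_pos (by linarith : (0:ℝ) < 2 * s + 1 + a) htpos]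
  have Hy := hxWE (q1, q2) (le_of_lt hq1pos) (le_of_lt hq2pos)
  rw [IsLinWE] at Hy
  obtain ⟨hy1, hy2, hf1, hg1, hf2, hg2⟩ := Hy
  simp only [Prod.fst, Prod.snd] at hf1 hg1 hf2 hg2
  set y := xWE (q1, q2) with hydef
  -- the determinant-like quantity is positive
  have hkey : 0 < 2 * s + 1 - s * (a + b) - a * b := by
    nlinarith [sq_nonneg (a - b), mul_pos hs (by linarith : (0:ℝ) < 2 - (a + b))]
  -- both components of y are positive
  have hy1pos : 0 < y.1 := by
    rcases lt_or_eq_of_le hy1 with h | h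
    · exact h
    exfalso
    have hy10 : y.1 = 0 := h.symm
    have h1 := hg1 hy10
    have hy2pos : 0 < y.2 := by
      rcases lt_or_eq_of_le hy2 with h2 | h2
      · exact h2
      exfalso
      have hy20 : y.2 = 0 := h2.symm
      rw [hy10, hy20, hq1] at h1
      nlinarith [mul_pos (by linarith : (0:ℝ) < 2 * s + 1 + a) htpos]
    have h2 := hf2 hy2pos
    rw [hy10, hq1] at h1
    rw [hy10, hq2] at h2
    -- h1 : w - s*(0+y2) ≤ w - (2s+1+a)t + a*y2
    -- h2 : w - (2s+1+b)t + (b*0+y2) = w - s*(0+y2)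
    have hA : (2 * s + 1 + a) * t ≤ (s + a) * y.2 := by linarith
    have hB : (1 + s) * y.2 = (2 * s + 1 + b) * t := by linarith
    have hC : (1 + s) * ((2 * s + 1 + a) * t) ≤ (1 + s) * ((s + a) * y.2) :=
      mul_le_mul_of_nonneg_left hA (by linarith)
    have hDq : (s + a) * ((1 + s) * y.2) = (s + a) * ((2 * s + 1 + b) * t) := by rw [hB]
    nlinarith [mul_pos htpos hkey, hC, hDq]
  have hy2pos : 0 < y.2 := by
    rcases lt_or_eq_of_le hy2 with h | h
    · exact h
    exfalso
    have hy20 : y.2 = 0 := h.symm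
    have h1 := hg2 hy20
    have h2 := hf1 hy1pos
    rw [hy20, hq2] at h1
    rw [hy20, hq1] at h2
    have hA : (2 * s + 1 + b) * t ≤ (s + b) * y.1 := by linarith
    have hB : (1 + s) * y.1 = (2 * s + 1 + a) * t := by linarith
    have hC : (1 + s) * ((2 * s + 1 + b) * t) ≤ (1 + s) * ((s + b) * y.1) :=
      mul_le_mul_of_nonneg_left hA (by linarith)
    have hDq : (s + b) * ((1 + s) * y.1) = (s + b) * ((2 * s + 1 + a) * t) := by rw [hB]
    nlinarith [mul_pos htpos hkey, hC, hDq]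
  have e1 := hf1 hy1pos
  have e2 := hf2 hy2pos
  rw [hq1] at e1
  rw [hq2] at e2
  have l1 : (1 + s) * y.1 + (a + s) * y.2 = (2 * s + 1 + a) * t := by linear_combination e1
  have l2 : (b + s) * y.1 + (1 + s) * y.2 = (2 * s + 1 + b) * t := by linear_combination e2
  -- solve the linear system: y = (t, t)
  have hDet : 0 < (1 + s) ^ 2 - (a + s) * (b + s) := by nlinarith
  have hy1t : y.1 = t := by
    have h0 : ((1 + s) ^ 2 - (a + s) * (b + s)) * (y.1 - t) = 0 := by
      linear_combination (1 + s) * l1 - (a + s) * l2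
    rcases mul_eq_zero.mp h0 with h | h
    · exact absurd h (ne_of_gt hDet)
    · linarith
  have hy2t : y.2 = t := by
    have h0 : ((1 + s) ^ 2 - (a + s) * (b + s)) * (y.2 - t) = 0 := by
      linear_combination (1 + s) * l2 - (b + s) * l1
    rcases mul_eq_zero.mp h0 with h | h
    · exact absurd h (ne_of_gt hDet)
    · linarith
  -- profit at the deviation is w * t
  have hprofq : q1 * y.1 + q2 * y.2 = w * t := by
    rw [hy1t, hy2t, hq1, hq2]
    linear_combination (-t) * hDt
  have hlow : w * t ≤ pstar.1 * (xWE pstar).1 + pstar.2 * (xWE pstar).2 := by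
    have h := hmax (q1, q2) (le_of_lt hq1pos) (le_of_lt hq2pos)
    rw [← hydef] at h
    linarith [hprofq ▸ h]
  have hwt : 0 < w * t := mul_pos hw htpos
  have hgap : 0 < (4 * (1 + s) - (4 * s + 2 + a + b)) * (w * t) :=
    mul_pos (by linarith) hwt
  have hw2 : w ^ 2 = (4 * s + 2 + a + b) * (w * t) := by
    linear_combination (-w) * hDt
  constructor
  · rcases lt_or_eq_of_le hx1 with h | h
    · exact h
    exfalso
    have hx10 : (xWE pstar).1 = 0 := h.symm
    have hx2pos : 0 < (xWE pstar).2 := by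
      rcases lt_or_eq_of_le hx2 with h2 | h2
      · exact h2
      exfalso
      have hx20 : (xWE pstar).2 = 0 := h2.symm
      rw [hx10, hx20] at hlow
      nlinarith
    have h2 := he2 hx2pos
    rw [hx10] at h2 hlow
    have hp2eq : pstar.2 = w - (1 + s) * (xWE pstar).2 := by linear_combination h2
    have hb1 : 4 * (1 + s) * (pstar.2 * (xWE pstar).2) ≤ w ^ 2 := by
      rw [hp2eq]; nlinarith [sq_nonneg (w - 2 * (1 + s) * (xWE pstar).2)]
    have hlow' : 4 * (1 + s) * (w * t) ≤ 4 * (1 + s) * (pstar.2 * (xWE pstar).2) := by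
      nlinarith [hlow]
    nlinarith
  · rcases lt_or_eq_of_le hx2 with h | h
    · exact h
    exfalso
    have hx20 : (xWE pstar).2 = 0 := h.symm
    have hx1pos : 0 < (xWE pstar).1 := by
      rcases lt_or_eq_of_le hx1 with h2 | h2
      · exact h2
      exfalso
      have hx10 : (xWE pstar).1 = 0 := h2.symm
      rw [hx10, hx20] at hlow
      nlinarith
    have h2 := he1 hx1pos
    rw [hx20] at h2 hlow
    have hp1eq : pstar.1 = w - (1 + s) * (xWE pstar).1 := by linear_combination h2
    have hb1 : 4 * (1 + s) * (pstar.1 * (xWE pstar).1) ≤ w ^ 2 := by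
      rw [hp1eq]; nlinarith [sq_nonneg (w - 2 * (1 + s) * (xWE pstar).1)]
    have hlow' : 4 * (1 + s) * (w * t) ≤ 4 * (1 + s) * (pstar.1 * (xWE pstar).1) := by
      nlinarith [hlow]
    nlinarith
end

section
/- Monopoly equilibrium with price differentiation (Theorem 3): Consider the two-AP linear market with cross-interference coefficients a, b > 0 satisfying a + b < 2 and inverse demand u(x) = w − s·x, w, s > 0. Let M be the 2×2 matrix [[1+s, a+s],[b+s, 1+s]] and 𝟏 = (1,1). Then the price vector p^ME = (M^{-1} + (M^{-1})ᵀ)^{-1} M^{-1} (w·𝟏) is the unique maximizer over p ∈ [0,∞)² of the total profit p_1·x_1^WE(p) + p_2·x_2^WE(p), the corresponding Wardrop equilibrium is x^WE(p^ME) = M^{-1}(I − (M^{-1} + (M^{-1})ᵀ)^{-1} M^{-1})(w·𝟏), and both of its components are strictly positive. -/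
open Matrix

private lemma aux_market (a b w s : ℝ) (ha : 0 < a) (hb : 0 < b) (hab : a + b < 2)
    (hw : 0 < w) (hs : 0 < s)
    (xWE : ℝ × ℝ → ℝ × ℝ)
    (hxWE : ∀ p : ℝ × ℝ, 0 ≤ p.1 → 0 ≤ p.2 → IsLinWE a b w s p (xWE p))
    (P1 P2 X : ℝ)
    (hp0 : P1 = w*(1+b+2*s)/(2+a+b+4*s)) (hp1 : P2 = w*(1+a+2*s)/(2+a+b+4*s))
    (hX : X = w/(2+a+b+4*s)) :
    (0 ≤ P1 ∧ 0 ≤ P2) ∧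
    (∀ q : ℝ × ℝ, 0 ≤ q.1 → 0 ≤ q.2 → q ≠ (P1, P2) →
      q.1 * (xWE q).1 + q.2 * (xWE q).2 <
        P1 * (xWE (P1, P2)).1 + P2 * (xWE (P1, P2)).2) ∧
    xWE (P1, P2) = (X, X) ∧
    0 < X ∧ 0 < X := by
  have hD0 : 0 < (1+s)*(1+s) - (a+s)*(b+s) := by nlinarith [sq_nonneg (a-b)]
  have hE0 : (0:ℝ) < 2+a+b+4*s := by linarith
  have hEne := ne_of_gt hE0
  have h1s : (0:ℝ) < 1+s := by linarith
  have hP1E : P1 * (2+a+b+4*s) = w*(1+b+2*s) := by rw [hp0]; field_simp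
  have hP2E : P2 * (2+a+b+4*s) = w*(1+a+2*s) := by rw [hp1]; field_simp
  have hXE : X * (2+a+b+4*s) = w := by rw [hX]; field_simp
  have hP1pos : 0 < P1 := by rw [hp0]; positivity
  have hP2pos : 0 < P2 := by rw [hp1]; positivity
  have hXpos : 0 < X := by rw [hX]; positivity
  have hP1w : P1 < w := by rw [hp0, div_lt_iff₀ hE0]; nlinarith
  have hPsum : P1 + P2 = w := by
    have h : (P1 + P2) * (2+a+b+4*s) = w * (2+a+b+4*s) := by
      rw [add_mul, hP1E, hP2E]; ring
    exact mul_right_cancel₀ hEne h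
  -- profit formula
  have hprofit : ∀ q : ℝ × ℝ, 0 ≤ q.1 → 0 ≤ q.2 →
      q.1 * (xWE q).1 + q.2 * (xWE q).2 =
      w*((xWE q).1 + (xWE q).2) - ((1+s)*(xWE q).1^2 + (a+b+2*s)*(xWE q).1*(xWE q).2
        + (1+s)*(xWE q).2^2) := by
    intro q hq1 hq2
    obtain ⟨hx1, hx2, he1, hi1, he2, hi2⟩ := hxWE q hq1 hq2
    set x1 := (xWE q).1; set x2 := (xWE q).2
    have t1 : q.1 * x1 = (w - s*(x1+x2) - x1 - a*x2) * x1 := by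
      rcases eq_or_lt_of_le hx1 with h | h
      · rw [← h]; ring
      · have e := he1 h; linear_combination x1 * e
    have t2 : q.2 * x2 = (w - s*(x1+x2) - b*x1 - x2) * x2 := by
      rcases eq_or_lt_of_le hx2 with h | h
      · rw [← h]; ring
      · have e := he2 h; linear_combination x2 * e
    rw [t1, t2]; ring
  -- quadratic completion
  have hbound : ∀ y1 y2 : ℝ,
      w*(y1+y2) - ((1+s)*y1^2 + (a+b+2*s)*y1*y2 + (1+s)*y2^2)
      = w*X - ((1+s)*((y1-X)^2+(y2-X)^2) + (a+b+2*s)*(y1-X)*(y2-X)) := by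
    intro y1 y2
    linear_combination (X - y1 - y2) * hXE
  have hQpos : ∀ z1 z2 : ℝ, (z1 ≠ 0 ∨ z2 ≠ 0) →
      0 < (1+s)*((z1)^2+(z2)^2) + (a+b+2*s)*z1*z2 := by
    intro z1 z2 hz
    have hzz : 0 < z1^2 + z2^2 := by
      rcases hz with h | h
      · have h1 : 0 < z1^2 := by positivity
        nlinarith [sq_nonneg z2]
      · have h1 : 0 < z2^2 := by positivity
        nlinarith [sq_nonneg z1]
    nlinarith [sq_nonneg (z1+z2), mul_pos (show (0:ℝ) < 2-(a+b) by linarith) hzz]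
  -- the WE at (P1, P2) is (X, X)
  have hfix : xWE (P1, P2) = (X, X) := by
    obtain ⟨hx1, hx2, he1, hi1, he2, hi2⟩ := hxWE (P1, P2) hP1pos.le hP2pos.le
    set x1 := (xWE (P1, P2)).1 with hx1def
    set x2 := (xWE (P1, P2)).2 with hx2def
    rcases eq_or_lt_of_le hx1 with h1 | h1
    · rcases eq_or_lt_of_le hx2 with h2 | h2
      · exfalso
        have i1 := hi1 h1.symm
        rw [← h1, ← h2] at i1
        linarith [i1]
      · exfalso
        have hx10 : x1 = 0 := h1.symm
        have e2 := he2 h2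
        have i1 := hi1 hx10
        have hwP2 : w - P2 = P1 := by linarith
        have k1 : x2 * (1+s) = P1 := by linear_combination e2 + hwP2 - (b+s)*hx10
        have k1' : (a+s) * (x2*(1+s)) = (a+s) * P1 := by rw [k1]
        have k2 : w - s*x2 ≤ P1 + a*x2 := by rw [hx10] at i1; linarith [i1]
        have k3 : w*(1+s) ≤ P1*(1+a+2*s) := by
          linarith [mul_le_mul_of_nonneg_right k2 h1s.le, k1']
        have k4 := mul_le_mul_of_nonneg_right k3 hE0.le
        have k5 : P1*(1+a+2*s)*(2+a+b+4*s) = w*(1+b+2*s)*(1+a+2*s) := by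
          linear_combination (1+a+2*s)*hP1E
        linarith [k4, k5, mul_pos hw hD0]
    · rcases eq_or_lt_of_le hx2 with h2 | h2
      · exfalso
        have hx20 : x2 = 0 := h2.symm
        have e1 := he1 h1
        have i2 := hi2 hx20
        have hwP1 : w - P1 = P2 := by linarith
        have k1 : x1 * (1+s) = P2 := by linear_combination e1 + hwP1 - (a+s)*hx20
        have k1' : (b+s) * (x1*(1+s)) = (b+s) * P2 := by rw [k1]
        have k2 : w - s*x1 ≤ P2 + b*x1 := by rw [hx20] at i2; linarith [i2]
        have k3 : w*(1+s) ≤ P2*(1+b+2*s) := by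
          linarith [mul_le_mul_of_nonneg_right k2 h1s.le, k1']
        have k4 := mul_le_mul_of_nonneg_right k3 hE0.le
        have k5 : P2*(1+b+2*s)*(2+a+b+4*s) = w*(1+a+2*s)*(1+b+2*s) := by
          linear_combination (1+b+2*s)*hP2E
        linarith [k4, k5, mul_pos hw hD0]
      · have e1 := he1 h1
        have e2 := he2 h2
        have q1 : x1 = X := by
          have h3 : ((1+s)*(1+s)-(a+s)*(b+s)) * (x1*(2+a+b+4*s) - w) = 0 := by
            linear_combination ((1+s)*(2+a+b+4*s))*e1 - ((a+s)*(2+a+b+4*s))*e2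
              - (1+s)*hP1E + (a+s)*hP2E
          have h4 : x1*(2+a+b+4*s) - w = 0 := by
            rcases mul_eq_zero.mp h3 with h | h
            · exact absurd h (ne_of_gt hD0)
            · exact h
          have h5 : x1*(2+a+b+4*s) = X*(2+a+b+4*s) := by rw [hXE]; linarith
          exact mul_right_cancel₀ hEne h5
        have q2 : x2 = X := by
          have h3 : ((1+s)*(1+s)-(a+s)*(b+s)) * (x2*(2+a+b+4*s) - w) = 0 := by
            linear_combination ((1+s)*(2+a+b+4*s))*e2 - ((b+s)*(2+a+b+4*s))*e1
              - (1+s)*hP2E + (b+s)*hP1E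
          have h4 : x2*(2+a+b+4*s) - w = 0 := by
            rcases mul_eq_zero.mp h3 with h | h
            · exact absurd h (ne_of_gt hD0)
            · exact h
          have h5 : x2*(2+a+b+4*s) = X*(2+a+b+4*s) := by rw [hXE]; linarith
          exact mul_right_cancel₀ hEne h5
        have hxx : xWE (P1, P2) = ((xWE (P1,P2)).1, (xWE (P1,P2)).2) := rfl
        rw [hxx, ← hx1def, ← hx2def, q1, q2]
  refine ⟨⟨hP1pos.le, hP2pos.le⟩, ?_, hfix, hXpos, hXpos⟩
  intro q hq1 hq2 hqne
  have hRHS : P1 * (xWE (P1, P2)).1 + P2 * (xWE (P1, P2)).2 = w * X := by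
    rw [hfix]
    simp only
    rw [← hPsum]; ring
  rw [hRHS, hprofit q hq1 hq2]
  set x1 := (xWE q).1 with hx1def
  set x2 := (xWE q).2 with hx2def
  rw [hbound x1 x2]
  have hne : x1 - X ≠ 0 ∨ x2 - X ≠ 0 := by
    by_contra h
    push_neg at h
    obtain ⟨h1, h2⟩ := h
    have hx1X : x1 = X := by linarith [sub_eq_zero.mp h1]
    have hx2X : x2 = X := by linarith [sub_eq_zero.mp h2]
    obtain ⟨_, _, he1, _, he2, _⟩ := hxWE q hq1 hq2
    have e1 := he1 (by rw [← hx1def, hx1X]; exact hXpos)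
    have e2 := he2 (by rw [← hx2def, hx2X]; exact hXpos)
    rw [← hx1def, ← hx2def, hx1X, hx2X] at e1 e2
    have hq1P : q.1 = P1 := by
      have h : q.1 * (2+a+b+4*s) = P1 * (2+a+b+4*s) := by
        rw [hP1E]
        linear_combination (2+a+b+4*s)*e1 - (1+a+2*s)*hXE
      exact mul_right_cancel₀ hEne h
    have hq2P : q.2 = P2 := by
      have h : q.2 * (2+a+b+4*s) = P2 * (2+a+b+4*s) := by
        rw [hP2E]
        linear_combination (2+a+b+4*s)*e2 - (1+b+2*s)*hXE
      exact mul_right_cancel₀ hEne h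
    exact hqne (Prod.ext hq1P hq2P)
  have hQ := hQpos (x1 - X) (x2 - X) hne
  linarith [hQ]

set_option maxHeartbeats 1000000 in
/-- **Monopoly equilibrium with price differentiation (Theorem 3).** -/
theorem monopoly_equilibrium_with_price_differentiation
    (a b w s : ℝ) (ha : 0 < a) (hb : 0 < b) (hab : a + b < 2)
    (hw : 0 < w) (hs : 0 < s)
    (xWE : ℝ × ℝ → ℝ × ℝ)
    (hxWE : ∀ p : ℝ × ℝ, 0 ≤ p.1 → 0 ≤ p.2 → IsLinWE a b w s p (xWE p))
    (M : Matrix (Fin 2) (Fin 2) ℝ) (hMdef : M = !![1 + s, a + s; b + s, 1 + s])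
    (pME : Fin 2 → ℝ)
    (hpME : pME = ((M⁻¹ + (M⁻¹)ᵀ)⁻¹ * M⁻¹).mulVec (fun _ => w))
    (xME : Fin 2 → ℝ)
    (hxME : xME = (M⁻¹ * (1 - (M⁻¹ + (M⁻¹)ᵀ)⁻¹ * M⁻¹)).mulVec (fun _ => w)) :
    (0 ≤ pME 0 ∧ 0 ≤ pME 1) ∧
    (∀ q : ℝ × ℝ, 0 ≤ q.1 → 0 ≤ q.2 → q ≠ (pME 0, pME 1) →
      q.1 * (xWE q).1 + q.2 * (xWE q).2 <
        pME 0 * (xWE (pME 0, pME 1)).1 + pME 1 * (xWE (pME 0, pME 1)).2) ∧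
    xWE (pME 0, pME 1) = (xME 0, xME 1) ∧
    0 < xME 0 ∧ 0 < xME 1 := by
  have hD0 : 0 < (1+s)*(1+s) - (a+s)*(b+s) := by nlinarith [sq_nonneg (a-b)]
  have hDne : (1+s)*(1+s) - (a+s)*(b+s) ≠ 0 := ne_of_gt hD0
  have hK0 : 0 < 4*((1+s)*(1+s)) - (a+b+2*s)^2 := by nlinarith
  have hKne := ne_of_gt hK0
  have hE0 : (0:ℝ) < 2+a+b+4*s := by linarith
  have h2ab0 : (0:ℝ) < 2-(a+b) := by linarith
  have h2abne : (2-(a+b)) ≠ 0 := ne_of_gt h2ab0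
  have hEne : (2+a+b+4*s) ≠ 0 := ne_of_gt hE0
  set D := (1+s)*(1+s) - (a+s)*(b+s) with hDdef
  set K := 4*((1+s)*(1+s)) - (a+b+2*s)^2 with hKdef
  have hMinv : M⁻¹ = !![(1+s)/D, -(a+s)/D; -(b+s)/D, (1+s)/D] := by
    apply inv_eq_right_inv
    subst hMdef
    ext i j
    fin_cases i <;> fin_cases j <;>
      simp [Matrix.mul_apply, Fin.sum_univ_two] <;> field_simp <;> ring
  have hN : M⁻¹ + (M⁻¹)ᵀ = !![2*(1+s)/D, -(a+b+2*s)/D; -(a+b+2*s)/D, 2*(1+s)/D] := by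
    rw [hMinv]
    ext i j
    fin_cases i <;> fin_cases j <;>
      simp [Matrix.add_apply, Matrix.transpose_apply, Matrix.vecHead, Matrix.vecTail] <;> ring
  have hNinv : (M⁻¹ + (M⁻¹)ᵀ)⁻¹ = !![2*(1+s)*D/K, (a+b+2*s)*D/K; (a+b+2*s)*D/K, 2*(1+s)*D/K] := by
    rw [hN]
    apply inv_eq_right_inv
    ext i j
    fin_cases i <;> fin_cases j <;>
      simp [Matrix.mul_apply, Fin.sum_univ_two] <;> field_simp <;> ring
  have hT : (M⁻¹ + (M⁻¹)ᵀ)⁻¹ * M⁻¹ =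
      !![(2*(1+s)*(1+s) - (a+b+2*s)*(b+s))/K, ((a+b+2*s)*(1+s) - 2*(1+s)*(a+s))/K;
         ((a+b+2*s)*(1+s) - 2*(1+s)*(b+s))/K, (2*(1+s)*(1+s) - (a+b+2*s)*(a+s))/K] := by
    rw [hNinv, hMinv]
    ext i j
    fin_cases i <;> fin_cases j <;>
      simp [Matrix.mul_apply, Fin.sum_univ_two] <;> field_simp <;> ring
  have hKE : K = (2+a+b+4*s)*(2-(a+b)) := by rw [hKdef]; ring
  have hp0 : pME 0 = w*(1+b+2*s)/(2+a+b+4*s) := by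
    rw [hpME, hT]
    simp [Matrix.mulVec, dotProduct, Fin.sum_univ_two]
    rw [hKE]
    field_simp
    ring
  have hp1 : pME 1 = w*(1+a+2*s)/(2+a+b+4*s) := by
    rw [hpME, hT]
    simp [Matrix.mulVec, dotProduct, Fin.sum_univ_two]
    rw [hKE]
    field_simp
    ring
  have hxv : xME = M⁻¹.mulVec ((fun _ => w) - pME) := by
    rw [hxME, Matrix.mul_sub, Matrix.mul_one, Matrix.sub_mulVec, Matrix.mulVec_sub,
      ← Matrix.mulVec_mulVec, ← hpME]
  have hx0 : xME 0 = w/(2+a+b+4*s) := by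
    rw [hxv, hMinv]
    simp [Matrix.mulVec, dotProduct, Fin.sum_univ_two]
    rw [hp0, hp1]
    field_simp
    ring
  have hx1 : xME 1 = w/(2+a+b+4*s) := by
    rw [hxv, hMinv]
    simp [Matrix.mulVec, dotProduct, Fin.sum_univ_two]
    rw [hp0, hp1]
    field_simp
    ring
  obtain ⟨hc1, hc2, hc3, hc4, _⟩ := aux_market a b w s ha hb hab hw hs xWE hxWE
    (pME 0) (pME 1) (w/(2+a+b+4*s)) hp0 hp1 rfl
  refine ⟨hc1, hc2, ?_, ?_, ?_⟩
  · rw [hx0, hx1]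
    exact hc3
  · rw [hx0]
    positivity
  · rw [hx1]
    positivity
end

section
/- Duopoly equilibrium under weak interference (Theorem 5, case 1): Consider the two-AP linear market with cross-interference coefficients 0 ≤ a ≤ 1, 0 ≤ b ≤ 1, a + b < 2, and inverse demand u(x) = w − s·x, w, s > 0. Define p_1* = w[(a+s)(1−b) + 2(1−a)(1+s)] / [4(1+s)² − (s+a)(s+b)] and p_2* = w[(b+s)(1−a) + 2(1−b)(1+s)] / [4(1+s)² − (s+a)(s+b)]. Then (p_1*, p_2*) is the unique Nash equilibrium of the duopoly pricing game: p_1*·x_1^WE(p_1*, p_2*) ≥ p_1·x_1^WE(p_1, p_2*) for all p_1 ≥ 0, p_2*·x_2^WE(p_1*, p_2*) ≥ p_2·x_2^WE(p_1*, p_2) for all p_2 ≥ 0, and no other pair in [0,∞)² has both properties. Moreover the equilibrium flows are x_1* = [(w−p_1*)(1+s) − (w−p_2*)(a+s)] / [(1+s)² − (s+a)(s+b)] and x_2* = [(w−p_2*)(1+s) − (w−p_1*)(b+s)] / [(1+s)² − (s+a)(s+b)]. -/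
/-!
Since `a + b < 2`, the excess cost `p + l x - u (x₁ + x₂)` is strongly monotone, so the Wardrop
equilibrium is unique and equals Cramer's solution `linFlow` of the interior system whenever that
solution is nonnegative. Whenever `x₁ > 0`, `linDet · x₁ ≤ A - (1 + s) p₁` with
`A = w (1 - a) + (a + s) p₂`, with equality when both flows are positive. Hence SP1's profit is at
most the parabola `p₁ (A - (1 + s) p₁) / linDet`, attained in the interior regime, and the vertex
`2 (1 + s) p₁ = A` is a best response. Conversely, at a Nash equilibrium both profits are positive
(an SP whose coefficient is below `1` can always earn something, so its price is positive, and
then so can the other), so both flows are interior and each price is a local maximum of its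
parabola. The two first-order conditions form a linear system with determinant
`4 (1 + s)² - (s + a)(s + b) > 0`, whose solution is `(p₁*, p₂*)`.
-/

theorem mul_sub_nonneg_of_complementary {F x y : ℝ} (hx : 0 ≤ x) (hpos : 0 < x → F = 0)
    (hzero : x = 0 → 0 ≤ F) (hy : 0 ≤ y) : 0 ≤ F * (y - x) := by
  rcases hx.eq_or_lt with rfl | hx
  · simpa using mul_nonneg (hzero rfl) hy
  · simp [hpos hx]

/-- The determinant of the linear system `(1 + s) x₁ + (a + s) x₂ = w - p₁`,
`(b + s) x₁ + (1 + s) x₂ = w - p₂` satisfied by an interior equilibrium. -/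
def linDet (a b s : ℝ) : ℝ := (1 + s) ^ 2 - (s + a) * (s + b)

/-- Cramer's solution of that system. -/
noncomputable def linFlow (a b w s : ℝ) (p : ℝ × ℝ) : ℝ × ℝ :=
  (((w - p.1) * (1 + s) - (w - p.2) * (a + s)) / linDet a b s,
   ((w - p.2) * (1 + s) - (w - p.1) * (b + s)) / linDet a b s)

theorem linDet_pos {a b s : ℝ} (ha : 0 ≤ a) (hb : 0 ≤ b) (hab : a + b < 2) (hs : 0 ≤ s) :
    0 < linDet a b s := by
  unfold linDet
  nlinarith [sq_nonneg (a - b), mul_nonneg hs (by linarith : (0 : ℝ) ≤ 2 - a - b)]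

theorem linDet_mul_linFlow_fst {a b w s : ℝ} (hD : linDet a b s ≠ 0) (p : ℝ × ℝ) :
    linDet a b s * (linFlow a b w s p).1 = (w - p.1) * (1 + s) - (w - p.2) * (a + s) :=
  mul_div_cancel₀ _ hD

theorem linDet_mul_linFlow_snd {a b w s : ℝ} (hD : linDet a b s ≠ 0) (p : ℝ × ℝ) :
    linDet a b s * (linFlow a b w s p).2 = (w - p.2) * (1 + s) - (w - p.1) * (b + s) :=
  mul_div_cancel₀ _ hD

theorem isLinWE_linFlow {a b w s : ℝ} {p : ℝ × ℝ} (hD : linDet a b s ≠ 0)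
    (h₁ : 0 ≤ (linFlow a b w s p).1) (h₂ : 0 ≤ (linFlow a b w s p).2) :
    IsLinWE a b w s p (linFlow a b w s p) := by
  have e₁ := linDet_mul_linFlow_fst (w := w) hD p
  have e₂ := linDet_mul_linFlow_snd (w := w) hD p
  set x := linFlow a b w s p
  have E₁ : (1 + s) * x.1 + (a + s) * x.2 = w - p.1 :=
    mul_left_cancel₀ hD (by unfold linDet at *; linear_combination (1 + s) * e₁ + (a + s) * e₂)
  have E₂ : (b + s) * x.1 + (1 + s) * x.2 = w - p.2 :=
    mul_left_cancel₀ hD (by unfold linDet at *; linear_combination (b + s) * e₁ + (1 + s) * e₂)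
  exact ⟨h₁, h₂, fun _ => by linarith, fun _ => by linarith, fun _ => by linarith,
    fun _ => by linarith⟩

namespace IsLinWE

variable {a b w s : ℝ} {p x y : ℝ × ℝ}

theorem swap (h : IsLinWE a b w s p x) : IsLinWE b a w s p.swap x.swap := by
  obtain ⟨h₁, h₂, h₃, h₄, h₅, h₆⟩ := h
  refine ⟨h₂, h₁, fun hx => ?_, fun hx => ?_, fun hx => ?_, fun hx => ?_⟩ <;>
    simp only [Prod.fst_swap, Prod.snd_swap] at hx ⊢
  · linarith [h₅ hx]
  · linarith [h₆ hx]
  · linarith [h₃ hx]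
  · linarith [h₄ hx]

theorem variational_inequality (h : IsLinWE a b w s p x) (hy₁ : 0 ≤ y.1) (hy₂ : 0 ≤ y.2) :
    0 ≤ (p.1 + (x.1 + a * x.2) - (w - s * (x.1 + x.2))) * (y.1 - x.1) +
      (p.2 + (b * x.1 + x.2) - (w - s * (x.1 + x.2))) * (y.2 - x.2) := by
  obtain ⟨h₁, h₂, h₃, h₄, h₅, h₆⟩ := h
  exact add_nonneg
    (mul_sub_nonneg_of_complementary h₁ (fun hx => sub_eq_zero.2 (h₃ hx))
      (fun hx => sub_nonneg.2 (h₄ hx)) hy₁)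
    (mul_sub_nonneg_of_complementary h₂ (fun hx => sub_eq_zero.2 (h₅ hx))
      (fun hx => sub_nonneg.2 (h₆ hx)) hy₂)

theorem unique (ha : 0 ≤ a) (hb : 0 ≤ b) (hab : a + b < 2) (hs : 0 ≤ s)
    (hx : IsLinWE a b w s p x) (hy : IsLinWE a b w s p y) : x = y := by
  have hxy := hx.variational_inequality hy.1 hy.2.1
  have hyx := hy.variational_inequality hx.1 hx.2.1
  have hsq : (x.1 - y.1) ^ 2 + (x.2 - y.2) ^ 2 ≤ 0 := by
    nlinarith [mul_nonneg (by linarith : 0 ≤ a + b + 2 * s) (sq_nonneg (x.1 - y.1 + (x.2 - y.2)))]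
  have h₁ : x.1 = y.1 := by nlinarith [sq_nonneg (x.1 - y.1), sq_nonneg (x.2 - y.2)]
  have h₂ : x.2 = y.2 := by nlinarith [sq_nonneg (x.1 - y.1), sq_nonneg (x.2 - y.2)]
  exact Prod.ext h₁ h₂

theorem eq_linFlow (hD : linDet a b s ≠ 0) (h : IsLinWE a b w s p x) (hx₁ : 0 < x.1)
    (hx₂ : 0 < x.2) : x = linFlow a b w s p := by
  have E₁ := h.2.2.1 hx₁
  have E₂ := h.2.2.2.2.1 hx₂
  refine Prod.ext ((eq_div_iff hD).2 ?_) ((eq_div_iff hD).2 ?_) <;> unfold linDet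
  · linear_combination (1 + s) * E₁ - (a + s) * E₂
  · linear_combination (1 + s) * E₂ - (b + s) * E₁

theorem linDet_mul_fst_le (ha : 0 ≤ a) (hs : 0 ≤ s) (h : IsLinWE a b w s p x) (hx₁ : 0 < x.1) :
    linDet a b s * x.1 ≤ (w - p.1) * (1 + s) - (w - p.2) * (a + s) := by
  have E₁ := h.2.2.1 hx₁
  unfold linDet
  rcases h.2.1.eq_or_lt with hx₂ | hx₂
  · have E₂ := h.2.2.2.2.2 hx₂.symm
    rw [← hx₂] at E₁ E₂
    nlinarith [mul_nonneg (by linarith : 0 ≤ a + s) (by linarith : 0 ≤ (b + s) * x.1 - (w - p.2))]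
  · exact le_of_eq (by linear_combination (1 + s) * E₁ - (a + s) * h.2.2.2.2.1 hx₂)

theorem fst_pos (hs : 0 ≤ s) (h : IsLinWE a b w s p x) (hpw : p.1 < w)
    (hlt : (a + s) * (w - p.2) < (1 + s) * (w - p.1)) : 0 < x.1 := by
  by_contra! hx₁
  have hx₁ : x.1 = 0 := le_antisymm hx₁ h.1
  have E₁ := h.2.2.2.1 hx₁
  rw [hx₁] at E₁
  rcases h.2.1.eq_or_lt with hx₂ | hx₂
  · rw [← hx₂] at E₁
    linarith
  · have E₂ := h.2.2.2.2.1 hx₂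
    rw [hx₁] at E₂
    nlinarith [mul_le_mul_of_nonneg_left E₁ (by linarith : (0 : ℝ) ≤ 1 + s)]

end IsLinWE

def IsWESelection (a b w s : ℝ) (xWE : ℝ × ℝ → ℝ × ℝ) : Prop :=
  ∀ p : ℝ × ℝ, 0 ≤ p.1 → 0 ≤ p.2 → IsLinWE a b w s p (xWE p)

def IsBestResponse₁ (xWE : ℝ × ℝ → ℝ × ℝ) (q : ℝ × ℝ) : Prop :=
  ∀ p₁ : ℝ, 0 ≤ p₁ → p₁ * (xWE (p₁, q.2)).1 ≤ q.1 * (xWE q).1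

/-- SP2's best-response condition is SP1's in the market with the roles of the APs exchanged. -/
def IsNash (xWE : ℝ × ℝ → ℝ × ℝ) (q : ℝ × ℝ) : Prop :=
  IsBestResponse₁ xWE q ∧ IsBestResponse₁ (fun p => (xWE p.swap).swap) q.swap

namespace IsWESelection

variable {a b w s : ℝ} {xWE : ℝ × ℝ → ℝ × ℝ} {q : ℝ × ℝ}

theorem swap (hsel : IsWESelection a b w s xWE) :
    IsWESelection b a w s fun p => (xWE p.swap).swap := by
  intro p hp₁ hp₂
  simpa using (hsel p.swap hp₂ hp₁).swap

theorem eq_linFlow (hsel : IsWESelection a b w s xWE) (ha : 0 ≤ a) (hb : 0 ≤ b) (hab : a + b < 2)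
    (hs : 0 ≤ s) (hq₁ : 0 ≤ q.1) (hq₂ : 0 ≤ q.2) (h₁ : 0 ≤ (linFlow a b w s q).1)
    (h₂ : 0 ≤ (linFlow a b w s q).2) : xWE q = linFlow a b w s q :=
  (hsel q hq₁ hq₂).unique ha hb hab hs (isLinWE_linFlow (linDet_pos ha hb hab hs).ne' h₁ h₂)

end IsWESelection

section Duopoly

variable {a b w s : ℝ} {xWE : ℝ × ℝ → ℝ × ℝ} {q : ℝ × ℝ}

theorem IsWESelection.eq_linFlow_of_focs (hsel : IsWESelection a b w s xWE) (ha : 0 ≤ a)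
    (hb : 0 ≤ b) (hab : a + b < 2) (hs : 0 ≤ s) (hq₁ : 0 ≤ q.1) (hq₂ : 0 ≤ q.2)
    (hfoc₁ : 2 * (1 + s) * q.1 = w * (1 - a) + (a + s) * q.2)
    (hfoc₂ : 2 * (1 + s) * q.2 = w * (1 - b) + (b + s) * q.1) :
    xWE q = linFlow a b w s q := by
  have hD := linDet_pos ha hb hab hs
  refine hsel.eq_linFlow ha hb hab hs hq₁ hq₂ (div_nonneg ?_ hD.le) (div_nonneg ?_ hD.le)
  · nlinarith [mul_nonneg (by linarith : (0 : ℝ) ≤ 1 + s) hq₁]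
  · nlinarith [mul_nonneg (by linarith : (0 : ℝ) ≤ 1 + s) hq₂]

theorem isBestResponse₁_of_focs (hsel : IsWESelection a b w s xWE) (ha : 0 ≤ a) (hb : 0 ≤ b)
    (hab : a + b < 2) (hs : 0 ≤ s) (hq₁ : 0 ≤ q.1) (hq₂ : 0 ≤ q.2)
    (hfoc₁ : 2 * (1 + s) * q.1 = w * (1 - a) + (a + s) * q.2)
    (hfoc₂ : 2 * (1 + s) * q.2 = w * (1 - b) + (b + s) * q.1) :
    IsBestResponse₁ xWE q := by
  have hD := linDet_pos ha hb hab hs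
  have hy : linDet a b s * (xWE q).1 = (1 + s) * q.1 := by
    rw [hsel.eq_linFlow_of_focs ha hb hab hs hq₁ hq₂ hfoc₁ hfoc₂, linDet_mul_linFlow_fst hD.ne']
    linear_combination -hfoc₁
  intro p₁ hp₁
  have hx := hsel (p₁, q.2) hp₁ hq₂
  refine le_of_mul_le_mul_left ?_ hD
  rcases hx.1.eq_or_lt with hx₁ | hx₁
  · rw [← hx₁, mul_zero, mul_zero, mul_left_comm, hy]
    positivity
  · have hle := hx.linDet_mul_fst_le ha hs hx₁
    calc linDet a b s * (p₁ * (xWE (p₁, q.2)).1)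
        = p₁ * (linDet a b s * (xWE (p₁, q.2)).1) := by ring
      _ ≤ p₁ * ((w - p₁) * (1 + s) - (w - q.2) * (a + s)) := mul_le_mul_of_nonneg_left hle hp₁
      _ ≤ (1 + s) * q.1 ^ 2 := by
        nlinarith [mul_nonneg (by linarith : 0 ≤ 1 + s) (sq_nonneg (q.1 - p₁))]
      _ = linDet a b s * (q.1 * (xWE q).1) := by rw [mul_left_comm, hy]; ring

theorem IsBestResponse₁.mul_fst_pos (hbr : IsBestResponse₁ xWE q)
    (hsel : IsWESelection a b w s xWE) (hw : 0 < w) (hs : 0 ≤ s) (hq₂ : 0 ≤ q.2)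
    (hA : 0 < w * (1 - a) + (a + s) * q.2) : 0 < q.1 * (xWE q).1 := by
  have hs₁ : (0 : ℝ) < 1 + s := by linarith
  set A := w * (1 - a) + (a + s) * q.2
  set m := min w (A / (1 + s))
  have hm : 0 < m := lt_min hw (div_pos hA hs₁)
  have hmw : m ≤ w := min_le_left _ _
  have hmA : m * (1 + s) ≤ A := (le_div_iff₀ hs₁).1 (min_le_right _ _)
  have hp₁ : 0 < m / 2 := by positivity
  have hx₁ : 0 < (xWE (m / 2, q.2)).1 :=
    (hsel (m / 2, q.2) hp₁.le hq₂).fst_pos hs (by linarith) (by dsimp only; linarith)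
  exact (mul_pos hp₁ hx₁).trans_le (hbr (m / 2) hp₁.le)

theorem IsBestResponse₁.foc (hbr : IsBestResponse₁ xWE q) (hsel : IsWESelection a b w s xWE)
    (ha : 0 ≤ a) (hb : 0 ≤ b) (hab : a + b < 2) (hs : 0 ≤ s) (hq₁ : 0 < q.1) (hq₂ : 0 ≤ q.2)
    (hy₁ : 0 < (xWE q).1) (hy₂ : 0 < (xWE q).2) :
    2 * (1 + s) * q.1 = w * (1 - a) + (a + s) * q.2 := by
  have hD := linDet_pos ha hb hab hs
  have hq : xWE q = linFlow a b w s q := (hsel q hq₁.le hq₂).eq_linFlow hD.ne' hy₁ hy₂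
  have hcont : Continuous fun p => linFlow a b w s (p, q.2) := by
    unfold linFlow; fun_prop
  have hmax : IsLocalMax (fun p => p * (linFlow a b w s (p, q.2)).1) q.1 := by
    filter_upwards [lt_mem_nhds hq₁,
      (hcont.fst.tendsto q.1).eventually_const_lt (hq ▸ hy₁),
      (hcont.snd.tendsto q.1).eventually_const_lt (hq ▸ hy₂)] with p hp h₁ h₂
    have := hbr p hp.le
    rwa [hsel.eq_linFlow (q := (p, q.2)) ha hb hab hs hp.le hq₂ h₁.le h₂.le, hq] at this
  have hderiv : HasDerivAt (fun p => p * (linFlow a b w s (p, q.2)).1)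
      (1 * (((w - q.1) * (1 + s) - (w - q.2) * (a + s)) / linDet a b s) +
        q.1 * (-1 * (1 + s) / linDet a b s)) q.1 := by
    simp only [linFlow]
    exact (hasDerivAt_id' q.1).mul
      (((((hasDerivAt_id' q.1).const_sub w).mul_const (1 + s)).sub_const _).div_const _)
  have := hmax.hasDerivAt_eq_zero hderiv
  field_simp at this
  linarith

theorem IsNash.profits_pos (hnash : IsNash xWE q) (hsel : IsWESelection a b w s xWE)
    (ha₀ : 0 ≤ a) (ha₁ : a ≤ 1) (hb₀ : 0 ≤ b) (hb₁ : b ≤ 1) (hab : a + b < 2) (hw : 0 < w)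
    (hs : 0 < s) (hq₁ : 0 ≤ q.1) (hq₂ : 0 ≤ q.2) :
    0 < q.1 * (xWE q).1 ∧ 0 < q.2 * (xWE q).2 := by
  have profit₁ (h : a < 1 ∨ 0 < q.2) : 0 < q.1 * (xWE q).1 :=
    hnash.1.mul_fst_pos hsel hw hs.le hq₂ (by rcases h with h | h <;> nlinarith)
  have profit₂ (h : b < 1 ∨ 0 < q.1) : 0 < q.2 * (xWE q).2 :=
    hnash.2.mul_fst_pos hsel.swap hw hs.le hq₁
      (by dsimp only [Prod.snd_swap]; rcases h with h | h <;> nlinarith)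
  rcases ha₁.lt_or_eq with ha | rfl
  · have h₁ := profit₁ (.inl ha)
    exact ⟨h₁, profit₂ (.inr (pos_of_mul_pos_left h₁ (hsel q hq₁ hq₂).1))⟩
  · have h₂ := profit₂ (.inl (by linarith))
    exact ⟨profit₁ (.inr (pos_of_mul_pos_left h₂ (hsel q hq₁ hq₂).2.1)), h₂⟩

theorem IsNash.focs (hnash : IsNash xWE q) (hsel : IsWESelection a b w s xWE) (ha₀ : 0 ≤ a)
    (ha₁ : a ≤ 1) (hb₀ : 0 ≤ b) (hb₁ : b ≤ 1) (hab : a + b < 2) (hw : 0 < w) (hs : 0 < s)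
    (hq₁ : 0 ≤ q.1) (hq₂ : 0 ≤ q.2) :
    2 * (1 + s) * q.1 = w * (1 - a) + (a + s) * q.2 ∧
      2 * (1 + s) * q.2 = w * (1 - b) + (b + s) * q.1 := by
  obtain ⟨h₁, h₂⟩ := hnash.profits_pos hsel ha₀ ha₁ hb₀ hb₁ hab hw hs hq₁ hq₂
  have hy := hsel q hq₁ hq₂
  exact ⟨hnash.1.foc hsel ha₀ hb₀ hab hs.le (pos_of_mul_pos_left h₁ hy.1) hq₂
      (pos_of_mul_pos_right h₁ hq₁) (pos_of_mul_pos_right h₂ hq₂),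
    hnash.2.foc hsel.swap hb₀ ha₀ (by linarith) hs.le (pos_of_mul_pos_left h₂ hy.2.1) hq₁
      (pos_of_mul_pos_right h₂ hq₂) (pos_of_mul_pos_right h₁ hq₁)⟩

end Duopoly

theorem focs_iff {a b w s p₁ p₂ : ℝ} (hE : 4 * (1 + s) ^ 2 - (s + a) * (s + b) ≠ 0) :
    (2 * (1 + s) * p₁ = w * (1 - a) + (a + s) * p₂ ∧
        2 * (1 + s) * p₂ = w * (1 - b) + (b + s) * p₁) ↔
      (p₁ = w * ((a + s) * (1 - b) + 2 * (1 - a) * (1 + s)) /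
          (4 * (1 + s) ^ 2 - (s + a) * (s + b)) ∧
        p₂ = w * ((b + s) * (1 - a) + 2 * (1 - b) * (1 + s)) /
          (4 * (1 + s) ^ 2 - (s + a) * (s + b))) := by
  rw [eq_div_iff hE, eq_div_iff hE]
  constructor
  · rintro ⟨h₁, h₂⟩
    constructor
    · linear_combination 2 * (1 + s) * h₁ + (a + s) * h₂
    · linear_combination (b + s) * h₁ + 2 * (1 + s) * h₂
  · rintro ⟨h₁, h₂⟩
    constructor
    · exact mul_left_cancel₀ hE (by linear_combination 2 * (1 + s) * h₁ - (a + s) * h₂)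
    · exact mul_left_cancel₀ hE (by linear_combination 2 * (1 + s) * h₂ - (b + s) * h₁)

/-- **Duopoly equilibrium under weak interference (Theorem 5, case 1).**
For `0 ≤ a ≤ 1`, `0 ≤ b ≤ 1`, `a + b < 2`, the pair `(p₁*, p₂*)` given by the stated
formulas is the unique Nash equilibrium of the duopoly pricing game, and the equilibrium
flows are given by the stated formulas. -/
theorem duopoly_equilibrium_weak_interference
    (a b w s : ℝ) (ha0 : 0 ≤ a) (ha1 : a ≤ 1) (hb0 : 0 ≤ b) (hb1 : b ≤ 1)
    (hab : a + b < 2) (hw : 0 < w) (hs : 0 < s)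
    (xWE : ℝ × ℝ → ℝ × ℝ)
    (hxWE : ∀ p : ℝ × ℝ, 0 ≤ p.1 → 0 ≤ p.2 → IsLinWE a b w s p (xWE p))
    (p1s p2s : ℝ)
    (hp1s : p1s = w * ((a + s) * (1 - b) + 2 * (1 - a) * (1 + s)) /
                    (4 * (1 + s) ^ 2 - (s + a) * (s + b)))
    (hp2s : p2s = w * ((b + s) * (1 - a) + 2 * (1 - b) * (1 + s)) /
                    (4 * (1 + s) ^ 2 - (s + a) * (s + b))) :
    (0 ≤ p1s ∧ 0 ≤ p2s) ∧
    (∀ p1 : ℝ, 0 ≤ p1 → p1 * (xWE (p1, p2s)).1 ≤ p1s * (xWE (p1s, p2s)).1) ∧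
    (∀ p2 : ℝ, 0 ≤ p2 → p2 * (xWE (p1s, p2)).2 ≤ p2s * (xWE (p1s, p2s)).2) ∧
    (∀ q : ℝ × ℝ, 0 ≤ q.1 → 0 ≤ q.2 →
      (∀ p1 : ℝ, 0 ≤ p1 → p1 * (xWE (p1, q.2)).1 ≤ q.1 * (xWE q).1) →
      (∀ p2 : ℝ, 0 ≤ p2 → p2 * (xWE (q.1, p2)).2 ≤ q.2 * (xWE q).2) →
      q = (p1s, p2s)) ∧
    xWE (p1s, p2s) =
      (((w - p1s) * (1 + s) - (w - p2s) * (a + s)) /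
          ((1 + s) ^ 2 - (s + a) * (s + b)),
       ((w - p2s) * (1 + s) - (w - p1s) * (b + s)) /
          ((1 + s) ^ 2 - (s + a) * (s + b))) := by
  have hsel : IsWESelection a b w s xWE := hxWE
  have hE : 0 < 4 * (1 + s) ^ 2 - (s + a) * (s + b) := by
    have := linDet_pos ha0 hb0 hab hs.le
    unfold linDet at this
    nlinarith
  obtain ⟨hfoc₁, hfoc₂⟩ := (focs_iff hE.ne').2 ⟨hp1s, hp2s⟩
  have hp₁ : 0 ≤ p1s := by
    rw [hp1s]
    have : 0 ≤ (a + s) * (1 - b) + 2 * (1 - a) * (1 + s) := by nlinarith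
    positivity
  have hp₂ : 0 ≤ p2s := by
    rw [hp2s]
    have : 0 ≤ (b + s) * (1 - a) + 2 * (1 - b) * (1 + s) := by nlinarith
    positivity
  refine ⟨⟨hp₁, hp₂⟩,
    isBestResponse₁_of_focs (q := (p1s, p2s)) hsel ha0 hb0 hab hs.le hp₁ hp₂ hfoc₁ hfoc₂,
    isBestResponse₁_of_focs (q := (p2s, p1s)) hsel.swap hb0 ha0 (by linarith) hs.le hp₂ hp₁
      hfoc₂ hfoc₁,
    fun q hq₁ hq₂ hbr₁ hbr₂ => ?_,
    hsel.eq_linFlow_of_focs (q := (p1s, p2s)) ha0 hb0 hab hs.le hp₁ hp₂ hfoc₁ hfoc₂⟩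
  obtain ⟨e₁, e₂⟩ := (focs_iff hE.ne').1
    (IsNash.focs ⟨hbr₁, hbr₂⟩ hsel ha0 ha1 hb0 hb1 hab hw hs hq₁ hq₂)
  exact Prod.ext (e₁.trans hp1s.symm) (e₂.trans hp2s.symm)
end

section
/- Market expulsion under strong one-sided interference (supporting claim of Theorem 5, case 2): Consider the two-AP linear market with cross-interference coefficients a > 1, 0 ≤ b < 1, a + b < 2, and inverse demand u(x) = w − s·x, w, s > 0. Let SP_2 set the price p_2 = (a−1)·w/(s+a). Then for every p_1 ≥ 0, the unique Wardrop equilibrium at prices (p_1, p_2) satisfies x_1 = 0 and x_2 = (w − p_2)/(1+s), and consequently SP_2's profit equals (a−1)·w²/(s+a)² regardless of p_1. -/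
/-- **Market expulsion under strong one-sided interference (supporting claim of Theorem 5,
case 2).** For `a > 1`, `0 ≤ b < 1`, `a + b < 2`, if SP₂ sets `p₂ = (a-1)·w/(s+a)`, then
for every `p₁ ≥ 0` the unique Wardrop equilibrium at `(p₁, p₂)` is
`(0, (w - p₂)/(1+s))`, and SP₂'s profit equals `(a-1)·w²/(s+a)²` regardless of `p₁`. -/
theorem market_expulsion_strong_interference
    (a b w s : ℝ) (ha : 1 < a) (hb0 : 0 ≤ b) (hb1 : b < 1) (hab : a + b < 2)
    (hw : 0 < w) (hs : 0 < s)
    (p2 : ℝ) (hp2 : p2 = (a - 1) * w / (s + a)) :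
    (∀ p1 : ℝ, 0 ≤ p1 →
      ∀ x : ℝ × ℝ, IsLinWE a b w s (p1, p2) x ↔ x = (0, (w - p2) / (1 + s))) ∧
    p2 * ((w - p2) / (1 + s)) = (a - 1) * w ^ 2 / (s + a) ^ 2 := by
  have hsa : (0:ℝ) < s + a := by linarith
  have h1s : (0:ℝ) < 1 + s := by linarith
  have hkey : (w - p2) * (s + a) = w * (1 + s) := by
    rw [hp2]; field_simp; ring
  have hwp2 : 0 < w - p2 := by nlinarith [mul_pos hw h1s]
  have hD : 0 < (1 + s) ^ 2 - (a + s) * (b + s) := by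
    nlinarith [mul_nonneg hb0 (by linarith : (0:ℝ) ≤ 2 - a - b),
      mul_pos hs (by linarith : (0:ℝ) < 2 - a - b), sq_nonneg (1 - b)]
  constructor
  · intro p1 hp1 x
    constructor
    · rintro ⟨h1, h2, h3, h4, h5, h6⟩
      rcases eq_or_lt_of_le h1 with hx1 | hx1
      · rcases eq_or_lt_of_le h2 with hx2 | hx2
        · -- both zero: contradiction since p2 < w
          exfalso
          have := h6 hx2.symm
          rw [← hx1, ← hx2] at this
          nlinarith
        · have e2 := h5 hx2
          rw [← hx1] at e2
          have hx2v : x.2 = (w - p2) / (1 + s) := by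
            field_simp
            linarith
          have : x = (x.1, x.2) := rfl
          rw [this, ← hx1, hx2v]
      · exfalso
        rcases eq_or_lt_of_le h2 with hx2 | hx2
        · -- x1 > 0, x2 = 0
          have e1 := h3 hx1
          have e6 := h6 hx2.symm
          rw [← hx2] at e1 e6
          -- e1 : p1 + (x.1 + a*0) = w - s*(x.1 + 0)
          -- e6 : w - s*(x.1+0) ≤ p2 + (b*x.1 + 0)
          nlinarith [mul_pos hD hx1, mul_nonneg hp1 (le_of_lt h1s),
            mul_le_mul_of_nonneg_right e6 (le_of_lt hsa)]
        · -- both positive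
          have e1 := h3 hx1
          have e2 := h5 hx2
          have hDx : ((1 + s) ^ 2 - (a + s) * (b + s)) * x.1 = -(1 + s) * p1 := by
            linear_combination (1 + s) * e1 - (a + s) * e2 - hkey
          nlinarith [mul_pos hD hx1, mul_nonneg (le_of_lt h1s) hp1]
    · rintro rfl
      refine ⟨le_refl 0, le_of_lt (div_pos hwp2 h1s), ?_, ?_, ?_, ?_⟩
      · intro h; exact absurd h (lt_irrefl 0)
      · intro _
        simp only
        have hx2 : (s + a) * ((w - p2) / (1 + s)) = w := by
          field_simp
          linarith [hkey]
        nlinarith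
      · intro _
        simp only
        field_simp
        ring
      · intro h
        exact absurd h (ne_of_gt (div_pos hwp2 h1s))
  · rw [hp2]; field_simp; ring
end

section
/- Lower bound on the price of competition on social welfare (PoCS): Consider the two-AP symmetric linear market with interference coefficient a ∈ [0,1), congestion functions l_1(x) = x_1 + a·x_2, l_2(x) = a·x_1 + x_2, and inverse demand u(x) = w − s·x, w, s > 0. Let x^ME = (w/(2(1+a+2s)), w/(2(1+a+2s))) be the Wardrop equilibrium flows at the monopoly prices and x^DE = (w(1+s)/((2+s−a)(1+2s+a)), w(1+s)/((2+s−a)(1+2s+a))) the Wardrop equilibrium flows at the duopoly prices. Then s² + 3s + 1 − 2as − a² > 0, and SW(x^ME)/SW(x^DE) = (3s + 1 + a)(s + 2 − a)² / (4(s+1)(s² + 3s + 1 − 2as − a²)) ≥ 3/4. -/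
/-- **Lower bound on the price of competition on social welfare (PoCS).**
For the symmetric two-AP linear market with `a ∈ [0,1)`, `w, s > 0`, social welfare
`SW x = w(x₁+x₂) − (s/2)(x₁+x₂)² − x₁·l₁(x) − x₂·l₂(x)`, and the monopoly and duopoly
equilibrium flows `x^ME`, `x^DE`, one has `s² + 3s + 1 − 2as − a² > 0` and
`SW(x^ME)/SW(x^DE) = (3s+1+a)(s+2−a)² / (4(s+1)(s²+3s+1−2as−a²)) ≥ 3/4`. -/
theorem pocs_lower_bound
    (a w s : ℝ) (ha0 : 0 ≤ a) (ha1 : a < 1) (hw : 0 < w) (hs : 0 < s)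
    (SW : ℝ × ℝ → ℝ)
    (hSW : ∀ x : ℝ × ℝ, SW x =
      w * (x.1 + x.2) - s / 2 * (x.1 + x.2) ^ 2
        - x.1 * (x.1 + a * x.2) - x.2 * (a * x.1 + x.2))
    (xME xDE : ℝ × ℝ)
    (hME : xME = (w / (2 * (1 + a + 2 * s)), w / (2 * (1 + a + 2 * s))))
    (hDE : xDE = (w * (1 + s) / ((2 + s - a) * (1 + 2 * s + a)),
                  w * (1 + s) / ((2 + s - a) * (1 + 2 * s + a)))) :
    0 < s ^ 2 + 3 * s + 1 - 2 * a * s - a ^ 2 ∧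
    SW xME / SW xDE =
      (3 * s + 1 + a) * (s + 2 - a) ^ 2 /
        (4 * (s + 1) * (s ^ 2 + 3 * s + 1 - 2 * a * s - a ^ 2)) ∧
    3 / 4 ≤ SW xME / SW xDE := by
  have hA : (0:ℝ) < 1 + a + 2 * s := by linarith
  have hB : (0:ℝ) < 2 + s - a := by linarith
  have hC : (0:ℝ) < 1 + 2 * s + a := by linarith
  have hD : (0:ℝ) < s ^ 2 + 3 * s + 1 - 2 * a * s - a ^ 2 := by nlinarith
  have h1 : SW xME = w ^ 2 * (3 * s + 1 + a) / (2 * (1 + a + 2 * s) ^ 2) := by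
    rw [hSW, hME]
    field_simp
    ring
  have h2 : SW xDE = 2 * w ^ 2 * (1 + s) * (s ^ 2 + 3 * s + 1 - 2 * a * s - a ^ 2) /
      ((2 + s - a) ^ 2 * (1 + 2 * s + a) ^ 2) := by
    rw [hSW, hDE]
    field_simp
    ring
  have hratio : SW xME / SW xDE =
      (3 * s + 1 + a) * (s + 2 - a) ^ 2 /
        (4 * (s + 1) * (s ^ 2 + 3 * s + 1 - 2 * a * s - a ^ 2)) := by
    rw [h1, h2]
    field_simp
    ring
  refine ⟨hD, hratio, ?_⟩
  rw [hratio]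
  rw [div_le_div_iff₀ (by norm_num) (by positivity)]
  nlinarith [sq_nonneg (s - a), sq_nonneg (s + 1 - a), sq_nonneg (s - a*s), sq_nonneg a, mul_pos hs hs, mul_nonneg (mul_nonneg ha0 ha0) ha0, mul_nonneg ha0 hs.le]
end

section
/- PoCS is unbounded from above: For every real M there exist s > 0 and a ∈ [0,1) with s² + 3s + 1 − 2as − a² > 0 such that (3s + 1 + a)(s + 2 − a)² / (4(s+1)(s² + 3s + 1 − 2as − a²)) > M. In particular, the ratio tends to +∞ as (s, a) → (0⁺, 1⁻). -/
open Filter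

private lemma pocs_aux_div (A B C : ℝ) : A / B * C⁻¹ = A / (B * C) := by
  rw [div_eq_mul_inv, div_eq_mul_inv, mul_inv, mul_assoc]

/-- **PoCS is unbounded from above.** For every real `M` there exist `s > 0` and
`a ∈ [0,1)` with `s² + 3s + 1 − 2as − a² > 0` such that
`(3s+1+a)(s+2−a)² / (4(s+1)(s²+3s+1−2as−a²)) > M`; in particular the ratio tends to `+∞`
as `(s, a) → (0⁺, 1⁻)`. -/
theorem pocs_unbounded_above :
    (∀ M : ℝ, ∃ s a : ℝ, 0 < s ∧ 0 ≤ a ∧ a < 1 ∧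
      0 < s ^ 2 + 3 * s + 1 - 2 * a * s - a ^ 2 ∧
      M < (3 * s + 1 + a) * (s + 2 - a) ^ 2 /
            (4 * (s + 1) * (s ^ 2 + 3 * s + 1 - 2 * a * s - a ^ 2))) ∧
    Tendsto
      (fun q : ℝ × ℝ =>
        (3 * q.1 + 1 + q.2) * (q.1 + 2 - q.2) ^ 2 /
          (4 * (q.1 + 1) * (q.1 ^ 2 + 3 * q.1 + 1 - 2 * q.2 * q.1 - q.2 ^ 2)))
      ((nhdsWithin 0 (Set.Ioi 0)) ×ˢ (nhdsWithin 1 (Set.Iio 1))) atTop := by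
  set F : Filter (ℝ × ℝ) := (nhdsWithin 0 (Set.Ioi 0)) ×ˢ (nhdsWithin 1 (Set.Iio 1)) with hF
  have hle : F ≤ nhds ((0 : ℝ), (1 : ℝ)) := by
    rw [hF, nhds_prod_eq]
    exact Filter.prod_mono nhdsWithin_le_nhds nhdsWithin_le_nhds
  have h1 : Tendsto (fun q : ℝ × ℝ => q.1) F (nhdsWithin 0 (Set.Ioi 0)) := tendsto_fst
  have h2 : Tendsto (fun q : ℝ × ℝ => q.2) F (nhdsWithin 1 (Set.Iio 1)) := tendsto_snd
  have hs_pos : ∀ᶠ q : ℝ × ℝ in F, 0 < q.1 := h1 eventually_mem_nhdsWithin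
  have ha_lt : ∀ᶠ q : ℝ × ℝ in F, q.2 < 1 := h2 eventually_mem_nhdsWithin
  have ha_pos : ∀ᶠ q : ℝ × ℝ in F, 0 < q.2 :=
    (h2.mono_right nhdsWithin_le_nhds).eventually
      (eventually_gt_nhds (by norm_num : (0 : ℝ) < 1))
  have hden_pos : ∀ᶠ q : ℝ × ℝ in F,
      0 < q.1 ^ 2 + 3 * q.1 + 1 - 2 * q.2 * q.1 - q.2 ^ 2 := by
    filter_upwards [hs_pos, ha_lt, ha_pos] with q hs hlt hpos
    nlinarith [sq_nonneg q.1]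
  have hden_cont : Continuous (fun q : ℝ × ℝ =>
      q.1 ^ 2 + 3 * q.1 + 1 - 2 * q.2 * q.1 - q.2 ^ 2) := by continuity
  have hden_tendsto : Tendsto (fun q : ℝ × ℝ =>
      q.1 ^ 2 + 3 * q.1 + 1 - 2 * q.2 * q.1 - q.2 ^ 2) F (nhds 0) := by
    have := (hden_cont.tendsto ((0 : ℝ), (1 : ℝ))).comp (tendsto_id.mono_right hle)
    simpa using this
  have hden_within : Tendsto (fun q : ℝ × ℝ =>
      q.1 ^ 2 + 3 * q.1 + 1 - 2 * q.2 * q.1 - q.2 ^ 2) F (nhdsWithin 0 (Set.Ioi 0)) :=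
    tendsto_nhdsWithin_of_tendsto_nhds_of_eventually_within _ hden_tendsto hden_pos
  have hinv : Tendsto (fun q : ℝ × ℝ =>
      (q.1 ^ 2 + 3 * q.1 + 1 - 2 * q.2 * q.1 - q.2 ^ 2)⁻¹) F atTop :=
    tendsto_inv_nhdsGT_zero.comp hden_within
  have hnum_ca : ContinuousAt (fun q : ℝ × ℝ =>
      (3 * q.1 + 1 + q.2) * (q.1 + 2 - q.2) ^ 2 / (4 * (q.1 + 1))) ((0 : ℝ), (1 : ℝ)) := by
    apply ContinuousAt.div
    · fun_prop
    · fun_prop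
    · norm_num
  have hnum : Tendsto (fun q : ℝ × ℝ =>
      (3 * q.1 + 1 + q.2) * (q.1 + 2 - q.2) ^ 2 / (4 * (q.1 + 1))) F (nhds (1 / 2)) := by
    have h := hnum_ca.tendsto.comp (tendsto_id.mono_right hle)
    norm_num at h
    exact h
  have hT : Tendsto
      (fun q : ℝ × ℝ =>
        (3 * q.1 + 1 + q.2) * (q.1 + 2 - q.2) ^ 2 /
          (4 * (q.1 + 1) * (q.1 ^ 2 + 3 * q.1 + 1 - 2 * q.2 * q.1 - q.2 ^ 2)))
      F atTop := by
    have := hnum.pos_mul_atTop (by norm_num : (0 : ℝ) < 1 / 2) hinv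
    refine this.congr (fun q => ?_)
    exact pocs_aux_div _ _ _
  refine ⟨fun M => ?_, hT⟩
  have hev : ∀ᶠ q : ℝ × ℝ in F,
      0 < q.1 ∧ 0 < q.2 ∧ q.2 < 1 ∧
        0 < q.1 ^ 2 + 3 * q.1 + 1 - 2 * q.2 * q.1 - q.2 ^ 2 ∧
        M < (3 * q.1 + 1 + q.2) * (q.1 + 2 - q.2) ^ 2 /
              (4 * (q.1 + 1) * (q.1 ^ 2 + 3 * q.1 + 1 - 2 * q.2 * q.1 - q.2 ^ 2)) := by
    filter_upwards [hs_pos, ha_pos, ha_lt, hden_pos, hT.eventually_gt_atTop M] with q a b c d e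
    exact ⟨a, b, c, d, e⟩
  obtain ⟨q, hq1, hq2, hq3, hq4, hq5⟩ := hev.exists
  exact ⟨q.1, q.2, hq1, le_of_lt hq2, hq3, hq4, hq5⟩
end

section
/- Lower bound on the price of competition on profits (PoCP): Consider the two-AP symmetric linear market with interference coefficient a ∈ [0,1), congestion functions l_1(x) = x_1 + a·x_2, l_2(x) = a·x_1 + x_2, and inverse demand u(x) = w − s·x, w, s > 0. The monopoly total profit is Π^ME = (w/2)·(w/(1+a+2s)) = w²/(2(1+a+2s)) and the duopoly total profit is Π^DE = 2·(w(1−a)/(2+s−a))·(w(1+s)/((2+s−a)(1+2s+a))). Then Π^ME/Π^DE = (s − a + 2)² / (4(1−a)(s+1)) ≥ 1. -/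
/-! With `x = 1 - a` and `y = 1 + s` the duopoly price and flow denominators become `x + y` and
`(x + y)(2y - x)`, while the monopoly flow denominator is `2y - x` as well; hence the ratio of
profits collapses to `(x + y)² / (4xy)`, which is at least `1` by AM–GM. -/

theorem monopoly_div_duopoly_profit {K : Type*} [Field K] {w x y d : K}
    (hw : w ≠ 0) (hx : x ≠ 0) (hy : y ≠ 0) (hxy : x + y ≠ 0) (hd : d ≠ 0) :
    w / 2 * (w / d) / (2 * (w * x / (x + y)) * (w * y / ((x + y) * d))) =
      (x + y) ^ 2 / (4 * x * y) := by
  field_simp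
  ring

theorem one_le_sq_add_div_four_mul {K : Type*} [Field K] [LinearOrder K] [IsStrictOrderedRing K]
    {x y : K} (hx : 0 < x) (hy : 0 < y) : 1 ≤ (x + y) ^ 2 / (4 * x * y) :=
  (one_le_div (by positivity)).2 (four_mul_le_sq_add x y)

/-- **Lower bound on the price of competition on profits (PoCP).**
In the symmetric two-AP linear market with `a ∈ [0,1)`, `w, s > 0`, the monopoly total
profit is `Π^ME = (w/2)·(w/(1+a+2s)) = w²/(2(1+a+2s))`, the duopoly total profit is
`Π^DE = 2·(w(1−a)/(2+s−a))·(w(1+s)/((2+s−a)(1+2s+a)))`, and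
`Π^ME/Π^DE = (s−a+2)² / (4(1−a)(s+1)) ≥ 1`. -/
theorem pocp_lower_bound
    (a w s : ℝ) (ha0 : 0 ≤ a) (ha1 : a < 1) (hw : 0 < w) (hs : 0 < s)
    (PiME PiDE : ℝ)
    (hME : PiME = (w / 2) * (w / (1 + a + 2 * s)))
    (hDE : PiDE = 2 * (w * (1 - a) / (2 + s - a)) *
                    (w * (1 + s) / ((2 + s - a) * (1 + 2 * s + a)))) :
    PiME = w ^ 2 / (2 * (1 + a + 2 * s)) ∧
    PiME / PiDE = (s - a + 2) ^ 2 / (4 * (1 - a) * (s + 1)) ∧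
    1 ≤ PiME / PiDE := by
  have hx : 0 < 1 - a := sub_pos.2 ha1
  have hy : 0 < 1 + s := by linarith
  have hd : 1 + a + 2 * s ≠ 0 := by linarith
  have hratio : PiME / PiDE = (s - a + 2) ^ 2 / (4 * (1 - a) * (s + 1)) := by
    rw [hME, hDE, show 2 + s - a = (1 - a) + (1 + s) by ring,
      show 1 + 2 * s + a = 1 + a + 2 * s by ring,
      monopoly_div_duopoly_profit hw.ne' hx.ne' hy.ne' (by linarith) hd]
    ring
  refine ⟨by rw [hME]; field_simp, hratio, ?_⟩
  rw [hratio, show s - a + 2 = (1 - a) + (s + 1) by ring]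
  exact one_le_sq_add_div_four_mul hx (by linarith)
end
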